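/- arXiv:1903.03089 — 4 statements merged into one kernel-verified Lean document; each statement's English description precedes it below -/
import Mathlib

section
/- In the three-level least squares setting with the given QR decompositions, the matrix A = BᵀB is invertible and the p×p sub-block A¹¹ of A⁻¹ satisfies A¹¹ = R⁻¹ R⁻ᵀ. -/
open Matrix

/-- The three-level least-squares design matrix: row block `(i,j)` (of height
`oᵢⱼ`, indexed by `Fin q₂ ⊕ Fin (k i j)` so that `oᵢⱼ = q₂ + k i j ≥ q₂`)
carries `Bᵢⱼ` against the first column block, `B̊ᵢⱼ` against the level-2 column
block of group `i`, `B̊̊ᵢⱼ` against the level-3 column block `(i,j)` and zeroes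
elsewhere. -/
def threeLevelB {p q₁ q₂ m : ℕ} {n : Fin m → ℕ} {k : (i : Fin m) → Fin (n i) → ℕ}
    (B1 : (i : Fin m) → (j : Fin (n i)) → Matrix (Fin q₂ ⊕ Fin (k i j)) (Fin p) ℝ)
    (B2 : (i : Fin m) → (j : Fin (n i)) → Matrix (Fin q₂ ⊕ Fin (k i j)) (Fin q₁) ℝ)
    (B3 : (i : Fin m) → (j : Fin (n i)) → Matrix (Fin q₂ ⊕ Fin (k i j)) (Fin q₂) ℝ) :
    Matrix ((i : Fin m) × ((j : Fin (n i)) × (Fin q₂ ⊕ Fin (k i j))))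
           (Fin p ⊕ (Σ i : Fin m, Fin q₁ ⊕ (Fin (n i) × Fin q₂))) ℝ :=
  Matrix.of fun x y =>
    match y with
    | Sum.inl a => B1 x.1 x.2.1 x.2.2 a
    | Sum.inr ⟨i, Sum.inl b⟩ => if x.1 = i then B2 x.1 x.2.1 x.2.2 b else 0
    | Sum.inr ⟨i, Sum.inr (j, b)⟩ =>
        if (⟨x.1, x.2.1⟩ : Σ i, Fin (n i)) = ⟨i, j⟩ then B3 x.1 x.2.1 x.2.2 b else 0

section Defs

variable {p q₁ q₂ m : ℕ} {n : Fin m → ℕ} {k : (i : Fin m) → Fin (n i) → ℕ}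

/-- `D₀ᵢⱼ := Qᵢⱼᵀ Bᵢⱼ`. -/
def D0 (Qij : (i : Fin m) → (j : Fin (n i)) →
      Matrix (Fin q₂ ⊕ Fin (k i j)) (Fin q₂ ⊕ Fin (k i j)) ℝ)
    (B1 : (i : Fin m) → (j : Fin (n i)) → Matrix (Fin q₂ ⊕ Fin (k i j)) (Fin p) ℝ)
    (i : Fin m) (j : Fin (n i)) : Matrix (Fin q₂ ⊕ Fin (k i j)) (Fin p) ℝ :=
  (Qij i j)ᵀ * B1 i j

/-- `D₁ᵢⱼ`: the first `q₂` rows of `D₀ᵢⱼ` (with `B` one of the design blocks). -/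
def D1 (Qij : (i : Fin m) → (j : Fin (n i)) →
      Matrix (Fin q₂ ⊕ Fin (k i j)) (Fin q₂ ⊕ Fin (k i j)) ℝ)
    (B1 : (i : Fin m) → (j : Fin (n i)) → Matrix (Fin q₂ ⊕ Fin (k i j)) (Fin p) ℝ)
    (i : Fin m) (j : Fin (n i)) : Matrix (Fin q₂) (Fin p) ℝ :=
  (D0 Qij B1 i j).submatrix Sum.inl id

/-- `D₂ᵢⱼ`: the remaining `oᵢⱼ − q₂` rows of `D₀ᵢⱼ`. -/
def D2 (Qij : (i : Fin m) → (j : Fin (n i)) →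
      Matrix (Fin q₂ ⊕ Fin (k i j)) (Fin q₂ ⊕ Fin (k i j)) ℝ)
    (B1 : (i : Fin m) → (j : Fin (n i)) → Matrix (Fin q₂ ⊕ Fin (k i j)) (Fin p) ℝ)
    (i : Fin m) (j : Fin (n i)) : Matrix (Fin (k i j)) (Fin p) ℝ :=
  (D0 Qij B1 i j).submatrix Sum.inr id

/-- The row-stack over `j` of `D₂ᵢⱼ` (also used for `D̊₂ᵢⱼ`). -/
def stackD2 (Qij : (i : Fin m) → (j : Fin (n i)) →
      Matrix (Fin q₂ ⊕ Fin (k i j)) (Fin q₂ ⊕ Fin (k i j)) ℝ)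
    (B1 : (i : Fin m) → (j : Fin (n i)) → Matrix (Fin q₂ ⊕ Fin (k i j)) (Fin p) ℝ)
    (i : Fin m) : Matrix ((j : Fin (n i)) × Fin (k i j)) (Fin p) ℝ :=
  Matrix.of fun x a => D2 Qij B1 i x.1 x.2 a

/-- `C₀ᵢ := Qᵢᵀ (row-stack over j of D₂ᵢⱼ)`. -/
def C0 {s : Fin m → ℕ}
    (Qi : (i : Fin m) → Matrix ((j : Fin (n i)) × Fin (k i j)) (Fin q₁ ⊕ Fin (s i)) ℝ)
    (Qij : (i : Fin m) → (j : Fin (n i)) →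
      Matrix (Fin q₂ ⊕ Fin (k i j)) (Fin q₂ ⊕ Fin (k i j)) ℝ)
    (B1 : (i : Fin m) → (j : Fin (n i)) → Matrix (Fin q₂ ⊕ Fin (k i j)) (Fin p) ℝ)
    (i : Fin m) : Matrix (Fin q₁ ⊕ Fin (s i)) (Fin p) ℝ :=
  (Qi i)ᵀ * stackD2 Qij B1 i

/-- `C₁ᵢ`: the first `q₁` rows of `C₀ᵢ`. -/
def C1 {s : Fin m → ℕ}
    (Qi : (i : Fin m) → Matrix ((j : Fin (n i)) × Fin (k i j)) (Fin q₁ ⊕ Fin (s i)) ℝ)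
    (Qij : (i : Fin m) → (j : Fin (n i)) →
      Matrix (Fin q₂ ⊕ Fin (k i j)) (Fin q₂ ⊕ Fin (k i j)) ℝ)
    (B1 : (i : Fin m) → (j : Fin (n i)) → Matrix (Fin q₂ ⊕ Fin (k i j)) (Fin p) ℝ)
    (i : Fin m) : Matrix (Fin q₁) (Fin p) ℝ :=
  (C0 Qi Qij B1 i).submatrix Sum.inl id

/-- `C₂ᵢ`: the remaining rows of `C₀ᵢ`. -/
def C2 {s : Fin m → ℕ}
    (Qi : (i : Fin m) → Matrix ((j : Fin (n i)) × Fin (k i j)) (Fin q₁ ⊕ Fin (s i)) ℝ)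
    (Qij : (i : Fin m) → (j : Fin (n i)) →
      Matrix (Fin q₂ ⊕ Fin (k i j)) (Fin q₂ ⊕ Fin (k i j)) ℝ)
    (B1 : (i : Fin m) → (j : Fin (n i)) → Matrix (Fin q₂ ⊕ Fin (k i j)) (Fin p) ℝ)
    (i : Fin m) : Matrix (Fin (s i)) (Fin p) ℝ :=
  (C0 Qi Qij B1 i).submatrix Sum.inr id

/-- The row-stack over `i` of `C₂ᵢ`. -/
def stackC2 {s : Fin m → ℕ}
    (Qi : (i : Fin m) → Matrix ((j : Fin (n i)) × Fin (k i j)) (Fin q₁ ⊕ Fin (s i)) ℝ)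
    (Qij : (i : Fin m) → (j : Fin (n i)) →
      Matrix (Fin q₂ ⊕ Fin (k i j)) (Fin q₂ ⊕ Fin (k i j)) ℝ)
    (B1 : (i : Fin m) → (j : Fin (n i)) → Matrix (Fin q₂ ⊕ Fin (k i j)) (Fin p) ℝ) :
    Matrix ((i : Fin m) × Fin (s i)) (Fin p) ℝ :=
  Matrix.of fun x a => C2 Qi Qij B1 x.1 x.2 a

end Defs

/-!
Left multiplication by `Uᵀ`, where `U Uᵀ = 1`, does not change a Gram matrix, and the Gram
matrix of a row-stack is the sum of the Gram matrices of its blocks. Rotating each row block `(i,j)`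
of `B` by `Qᵢⱼᵀ`, then the stacked trailing rows of group `i` by `Qᵢᵀ`, therefore writes
`A = BᵀB` as the Gram matrix of all the leading rows produced on the way plus that of the final
trailing rows. By the QR factorisations of `B̊̊ᵢⱼ` and of the stacked `D̊₂ᵢⱼ`, the final trailing
rows vanish outside the first column block, where they are the stacked `C₂ᵢ = Q [R; 0]`, with
Gram matrix `RᵀR`. Hence `A = FᵀF` for a square `F` with first block row `[R 0]`. Such an `F` is
block lower triangular, so `F⁻¹` has first block row `[R⁻¹ 0]` and `A⁻¹ = F⁻¹F⁻ᵀ` has leading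
block `R⁻¹R⁻ᵀ`.
-/

namespace Matrix

section RowBlocks

variable {R n : Type*} [NonUnitalNonAssocSemiring R]

theorem transpose_mul_eq_sum_sigma {ι : Type*} [Fintype ι] {κ : ι → Type*}
    [∀ i, Fintype (κ i)] (M N : Matrix (Σ i, κ i) n R) :
    Mᵀ * N = ∑ i, (M.submatrix (Sigma.mk i) id)ᵀ * N.submatrix (Sigma.mk i) id := by
  ext x y
  simp only [sum_apply, mul_apply, transpose_apply, submatrix_apply, id_eq, Fintype.sum_sigma]

theorem transpose_mul_eq_sum_prod {ι κ : Type*} [Fintype ι] [Fintype κ]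
    (M N : Matrix (ι × κ) n R) :
    Mᵀ * N = ∑ i, (M.submatrix (Prod.mk i) id)ᵀ * N.submatrix (Prod.mk i) id := by
  ext x y
  simp only [sum_apply, mul_apply, transpose_apply, submatrix_apply, id_eq, Fintype.sum_prod_type]

theorem transpose_mul_eq_toRows {m₁ m₂ : Type*} [Fintype m₁] [Fintype m₂]
    (M N : Matrix (m₁ ⊕ m₂) n R) :
    Mᵀ * N = M.toRows₁ᵀ * N.toRows₁ + M.toRows₂ᵀ * N.toRows₂ := by
  ext x y
  simp only [add_apply, mul_apply, transpose_apply, toRows₁_apply, toRows₂_apply,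
    Fintype.sum_sum_type]

end RowBlocks

section Orthogonal

variable {R m k n : Type*} [CommSemiring R] [Fintype m] [Fintype k]

theorem transpose_mul_self_of_mul_transpose_eq_one [DecidableEq m] {Q : Matrix m k R}
    (hQ : Q * Qᵀ = 1) (M : Matrix m n R) : (Qᵀ * M)ᵀ * (Qᵀ * M) = Mᵀ * M := by
  rw [transpose_mul, transpose_transpose, Matrix.mul_assoc, ← Matrix.mul_assoc Q, hQ,
    Matrix.one_mul]

theorem transpose_mul_eq_of_eq_mul [DecidableEq k] {Q : Matrix m k R} (hQ : Qᵀ * Q = 1)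
    {M : Matrix m n R} {X : Matrix k n R} (h : M = Q * X) : Qᵀ * M = X := by
  rw [h, ← Matrix.mul_assoc, hQ, Matrix.one_mul]

theorem transpose_mul_self_eq_of_eq_mul [DecidableEq k] {Q : Matrix m k R} (hQ : Qᵀ * Q = 1)
    {M : Matrix m n R} {X : Matrix k n R} (h : M = Q * X) : Mᵀ * M = Xᵀ * X := by
  rw [h, Matrix.transpose_mul, Matrix.mul_assoc, transpose_mul_eq_of_eq_mul hQ rfl]

end Orthogonal

section BlockwiseQR

variable {R n ι : Type*} [CommSemiring R] [Fintype ι]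
  {κ τ σ : ι → Type*} [∀ i, Fintype (κ i)] [∀ i, DecidableEq (κ i)]
  [∀ i, Fintype (τ i)] [∀ i, Fintype (σ i)]

def blockwiseResidual (Q : ∀ i, Matrix (κ i) (τ i ⊕ σ i) R) (M : Matrix (Σ i, κ i) n R) :
    Matrix (Σ i, σ i) n R :=
  of fun x c => ((Q x.1)ᵀ * M.submatrix (Sigma.mk x.1) id) (Sum.inr x.2) c

theorem transpose_mul_self_eq_sum_add_blockwiseResidual
    {Q : ∀ i, Matrix (κ i) (τ i ⊕ σ i) R} (hQ : ∀ i, Q i * (Q i)ᵀ = 1)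
    (M : Matrix (Σ i, κ i) n R) :
    Mᵀ * M = ∑ i, ((Q i)ᵀ * M.submatrix (Sigma.mk i) id).toRows₁ᵀ *
        ((Q i)ᵀ * M.submatrix (Sigma.mk i) id).toRows₁ +
      (blockwiseResidual Q M)ᵀ * blockwiseResidual Q M := by
  rw [transpose_mul_eq_sum_sigma M, transpose_mul_eq_sum_sigma (blockwiseResidual Q M),
    ← Finset.sum_add_distrib]
  refine Finset.sum_congr rfl fun i _ => ?_
  rw [← transpose_mul_self_of_mul_transpose_eq_one (hQ i), transpose_mul_eq_toRows]
  rfl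

end BlockwiseQR

theorem transpose_mul_self_fromCols_zero {R m n₁ n₂ : Type*} [Semiring R] [Fintype m]
    (X : Matrix m n₁ R) :
    (fromCols X (0 : Matrix m n₂ R))ᵀ * fromCols X (0 : Matrix m n₂ R) =
      fromBlocks (Xᵀ * X) 0 0 0 := by
  rw [transpose_fromCols, fromRows_mul_fromCols]
  simp

theorem isUnit_det_of_rank_eq_card {K n : Type*} [Field K] [Fintype n] [DecidableEq n]
    {A : Matrix n n K} (h : A.rank = Fintype.card n) : IsUnit A.det := by
  have hrange : LinearMap.range A.mulVecLin = ⊤ :=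
    Submodule.eq_top_of_finrank_eq (by rw [Module.finrank_fintype_fun_eq_card]; exact h)
  rw [← isUnit_iff_isUnit_det, ← mulVec_surjective_iff_isUnit]
  exact LinearMap.range_eq_top.mp hrange

theorem toBlocks₁₁_inv_transpose_mul_self_fromRows_fromCols_zero {K m n : Type*} [Field K]
    [Fintype m] [Fintype n] [DecidableEq m] [DecidableEq n]
    {A : Matrix m m K} {L : Matrix n (m ⊕ n) K}
    (h : IsUnit ((fromRows (fromCols A 0) L)ᵀ * fromRows (fromCols A 0) L).det) :
    (((fromRows (fromCols A 0) L)ᵀ * fromRows (fromCols A 0) L)⁻¹).toBlocks₁₁ =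
      A⁻¹ * (Aᵀ)⁻¹ := by
  rw [← fromCols_toCols L, fromRows_fromCols_eq_fromBlocks] at h ⊢
  rw [det_mul, det_transpose, IsUnit.mul_iff, and_self, det_fromBlocks_zero₁₂,
    IsUnit.mul_iff, ← isUnit_iff_isUnit_det, ← isUnit_iff_isUnit_det] at h
  rw [Matrix.mul_inv_rev, ← transpose_nonsing_inv,
    inv_fromBlocks_zero₁₂_of_isUnit_iff _ _ _ (iff_of_true h.1 h.2), fromBlocks_transpose,
    fromBlocks_multiply, toBlocks_fromBlocks₁₁, transpose_nonsing_inv]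
  simp

end Matrix

namespace ThreeLevelLS

variable {p q₁ q₂ m : ℕ} {n : Fin m → ℕ} {k : (i : Fin m) → Fin (n i) → ℕ} {s : Fin m → ℕ}
  (Qij : (i : Fin m) → (j : Fin (n i)) →
    Matrix (Fin q₂ ⊕ Fin (k i j)) (Fin q₂ ⊕ Fin (k i j)) ℝ)
  (Qi : (i : Fin m) → Matrix ((j : Fin (n i)) × Fin (k i j)) (Fin q₁ ⊕ Fin (s i)) ℝ)
  (B1 : (i : Fin m) → (j : Fin (n i)) → Matrix (Fin q₂ ⊕ Fin (k i j)) (Fin p) ℝ)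
  (B2 : (i : Fin m) → (j : Fin (n i)) → Matrix (Fin q₂ ⊕ Fin (k i j)) (Fin q₁) ℝ)
  (B3 : (i : Fin m) → (j : Fin (n i)) → Matrix (Fin q₂ ⊕ Fin (k i j)) (Fin q₂) ℝ)

local notation "Col" => Fin p ⊕ (Σ i : Fin m, Fin q₁ ⊕ (Fin (n i) × Fin q₂))

/-- The full-width version of the stacked `D₂ᵢⱼ`: its first column block is `stackD2 Qij B1`. -/
def levelTwoInput : Matrix ((i : Fin m) × (j : Fin (n i)) × Fin (k i j)) Col ℝ :=
  of fun x c =>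
    blockwiseResidual (Qij x.1) ((threeLevelB B1 B2 B3).submatrix (fun r => ⟨x.1, r⟩) id) x.2 c

def levelOneInput : Matrix ((i : Fin m) × Fin (s i)) Col ℝ :=
  blockwiseResidual Qi (levelTwoInput Qij B1 B2 B3)

/-- The leading rows of the level-2 and level-3 rotations, indexed like the level-2 and level-3
columns so that `fromRows (fromCols R 0) lowerRows` is square. -/
def lowerRows : Matrix ((i : Fin m) × (Fin q₁ ⊕ (Fin (n i) × Fin q₂))) Col ℝ :=
  of fun x c =>
    match x with
    | ⟨i, Sum.inl a⟩ =>
        ((Qi i)ᵀ * (levelTwoInput Qij B1 B2 B3).submatrix (Sigma.mk i) id) (Sum.inl a) c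
    | ⟨i, Sum.inr (j, b)⟩ =>
        ((Qij i j)ᵀ * (threeLevelB B1 B2 B3).submatrix (fun r => ⟨i, j, r⟩) id) (Sum.inl b) c

theorem transpose_mul_self_threeLevelB_eq_add (hQij' : ∀ i j, Qij i j * (Qij i j)ᵀ = 1)
    (hQi' : ∀ i, Qi i * (Qi i)ᵀ = 1) :
    (threeLevelB B1 B2 B3)ᵀ * threeLevelB B1 B2 B3 =
      (lowerRows Qij Qi B1 B2 B3)ᵀ * lowerRows Qij Qi B1 B2 B3 +
        (levelOneInput Qij Qi B1 B2 B3)ᵀ * levelOneInput Qij Qi B1 B2 B3 := by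
  set B := threeLevelB B1 B2 B3
  set N := levelTwoInput Qij B1 B2 B3
  set T₃ := fun i j => ((Qij i j)ᵀ * B.submatrix (fun r => ⟨i, j, r⟩) id).toRows₁
  set T₂ := fun i => ((Qi i)ᵀ * N.submatrix (Sigma.mk i) id).toRows₁
  have hB : Bᵀ * B = ∑ i, ∑ j, (T₃ i j)ᵀ * T₃ i j + Nᵀ * N := by
    rw [transpose_mul_eq_sum_sigma B, transpose_mul_eq_sum_sigma N, ← Finset.sum_add_distrib]
    exact Finset.sum_congr rfl fun i _ =>
      transpose_mul_self_eq_sum_add_blockwiseResidual (hQij' i) _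
  have hN : Nᵀ * N = ∑ i, (T₂ i)ᵀ * T₂ i +
      (levelOneInput Qij Qi B1 B2 B3)ᵀ * levelOneInput Qij Qi B1 B2 B3 :=
    transpose_mul_self_eq_sum_add_blockwiseResidual hQi' N
  have hL : (lowerRows Qij Qi B1 B2 B3)ᵀ * lowerRows Qij Qi B1 B2 B3 =
      ∑ i, ((T₂ i)ᵀ * T₂ i + ∑ j, (T₃ i j)ᵀ * T₃ i j) := by
    rw [transpose_mul_eq_sum_sigma]
    refine Finset.sum_congr rfl fun i _ => ?_
    rw [transpose_mul_eq_toRows, transpose_mul_eq_sum_prod]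
    rfl
  rw [hB, hN, hL, Finset.sum_add_distrib]
  abel

theorem levelTwoInput_apply_inr_inl (y : (i : Fin m) × (j : Fin (n i)) × Fin (k i j))
    (i : Fin m) (b : Fin q₁) :
    levelTwoInput Qij B1 B2 B3 y (Sum.inr ⟨i, Sum.inl b⟩) =
      if y.1 = i then stackD2 Qij B2 y.1 y.2 b else 0 := by
  split_ifs with h <;>
    simp [levelTwoInput, blockwiseResidual, stackD2, D2, D0, threeLevelB, mul_apply, h]

theorem levelTwoInput_apply_inr_inr (hQij : ∀ i j, (Qij i j)ᵀ * Qij i j = 1)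
    {Rij : (i : Fin m) → (j : Fin (n i)) → Matrix (Fin q₂) (Fin q₂) ℝ}
    (hQRij : ∀ i j, B3 i j = Qij i j * Matrix.fromRows (Rij i j) 0)
    (y : (i : Fin m) × (j : Fin (n i)) × Fin (k i j)) (i : Fin m) (w : Fin (n i) × Fin q₂) :
    levelTwoInput Qij B1 B2 B3 y (Sum.inr ⟨i, Sum.inr w⟩) = 0 := by
  by_cases h : (⟨y.1, y.2.1⟩ : Σ i, Fin (n i)) = ⟨i, w.1⟩
  · have hR := transpose_mul_eq_of_eq_mul (hQij y.1 y.2.1) (hQRij y.1 y.2.1)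
    simpa [levelTwoInput, blockwiseResidual, threeLevelB, mul_apply, h] using
      congr_fun₂ hR (Sum.inr y.2.2) w.2
  · simp [levelTwoInput, blockwiseResidual, threeLevelB, mul_apply, h]

theorem levelOneInput_eq (hQij : ∀ i j, (Qij i j)ᵀ * Qij i j = 1)
    {Rij : (i : Fin m) → (j : Fin (n i)) → Matrix (Fin q₂) (Fin q₂) ℝ}
    (hQRij : ∀ i j, B3 i j = Qij i j * Matrix.fromRows (Rij i j) 0)
    (hQi : ∀ i, (Qi i)ᵀ * Qi i = 1) {Ri : (i : Fin m) → Matrix (Fin q₁) (Fin q₁) ℝ}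
    (hQRi : ∀ i, stackD2 Qij B2 i = Qi i * Matrix.fromRows (Ri i) 0) :
    levelOneInput Qij Qi B1 B2 B3 = fromCols (stackC2 Qi Qij B1) 0 := by
  ext x (a | ⟨i, b | w⟩)
  · rfl
  · have := congr_fun₂ (transpose_mul_eq_of_eq_mul (hQi x.1) (hQRi x.1)) (Sum.inr x.2) b
    by_cases h : x.1 = i
    · simpa [levelOneInput, blockwiseResidual, mul_apply, levelTwoInput_apply_inr_inl, h]
        using this
    · simp [levelOneInput, blockwiseResidual, mul_apply, levelTwoInput_apply_inr_inl, h]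
  · simp [levelOneInput, blockwiseResidual, mul_apply,
      levelTwoInput_apply_inr_inr Qij B1 B2 B3 hQij hQRij]

theorem transpose_mul_self_threeLevelB_eq_fromRows {t : ℕ}
    (hQij : ∀ i j, (Qij i j)ᵀ * Qij i j = 1) (hQij' : ∀ i j, Qij i j * (Qij i j)ᵀ = 1)
    {Rij : (i : Fin m) → (j : Fin (n i)) → Matrix (Fin q₂) (Fin q₂) ℝ}
    (hQRij : ∀ i j, B3 i j = Qij i j * Matrix.fromRows (Rij i j) 0)
    (hQi : ∀ i, (Qi i)ᵀ * Qi i = 1) (hQi' : ∀ i, Qi i * (Qi i)ᵀ = 1)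
    {Ri : (i : Fin m) → Matrix (Fin q₁) (Fin q₁) ℝ}
    (hQRi : ∀ i, stackD2 Qij B2 i = Qi i * Matrix.fromRows (Ri i) 0)
    {Q : Matrix ((i : Fin m) × Fin (s i)) (Fin p ⊕ Fin t) ℝ} (hQ : Qᵀ * Q = 1)
    {R : Matrix (Fin p) (Fin p) ℝ} (hQR : stackC2 Qi Qij B1 = Q * Matrix.fromRows R 0) :
    (threeLevelB B1 B2 B3)ᵀ * threeLevelB B1 B2 B3 =
      (fromRows (fromCols R 0) (lowerRows Qij Qi B1 B2 B3))ᵀ *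
        fromRows (fromCols R 0) (lowerRows Qij Qi B1 B2 B3) := by
  have hS : (stackC2 Qi Qij B1)ᵀ * stackC2 Qi Qij B1 = Rᵀ * R := by
    rw [transpose_mul_self_eq_of_eq_mul hQ hQR, transpose_mul_eq_toRows]
    simp
  rw [transpose_mul_self_threeLevelB_eq_add Qij Qi B1 B2 B3 hQij' hQi',
    levelOneInput_eq Qij Qi B1 B2 B3 hQij hQRij hQi hQRi,
    transpose_mul_eq_toRows (fromRows _ _), toRows₁_fromRows, toRows₂_fromRows,
    transpose_mul_self_fromCols_zero, transpose_mul_self_fromCols_zero, hS, add_comm]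

end ThreeLevelLS

theorem threeLevelLS_inverse_block11_general {p q₁ q₂ m t : ℕ} {n : Fin m → ℕ}
    {k : (i : Fin m) → Fin (n i) → ℕ} {s : Fin m → ℕ}
    (B1 : (i : Fin m) → (j : Fin (n i)) → Matrix (Fin q₂ ⊕ Fin (k i j)) (Fin p) ℝ)
    (B2 : (i : Fin m) → (j : Fin (n i)) → Matrix (Fin q₂ ⊕ Fin (k i j)) (Fin q₁) ℝ)
    (B3 : (i : Fin m) → (j : Fin (n i)) → Matrix (Fin q₂ ⊕ Fin (k i j)) (Fin q₂) ℝ)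
    (hrank : (threeLevelB B1 B2 B3).rank =
      Fintype.card (Fin p ⊕ (Σ i : Fin m, Fin q₁ ⊕ (Fin (n i) × Fin q₂))))
    (Qij : (i : Fin m) → (j : Fin (n i)) →
      Matrix (Fin q₂ ⊕ Fin (k i j)) (Fin q₂ ⊕ Fin (k i j)) ℝ)
    (hQij : ∀ i j, (Qij i j)ᵀ * Qij i j = 1) (hQij' : ∀ i j, Qij i j * (Qij i j)ᵀ = 1)
    (Rij : (i : Fin m) → (j : Fin (n i)) → Matrix (Fin q₂) (Fin q₂) ℝ)
    (hQRij : ∀ i j, B3 i j = Qij i j * Matrix.fromRows (Rij i j) 0)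
    (Qi : (i : Fin m) → Matrix ((j : Fin (n i)) × Fin (k i j)) (Fin q₁ ⊕ Fin (s i)) ℝ)
    (hQi : ∀ i, (Qi i)ᵀ * Qi i = 1) (hQi' : ∀ i, Qi i * (Qi i)ᵀ = 1)
    (Ri : (i : Fin m) → Matrix (Fin q₁) (Fin q₁) ℝ)
    (hQRi : ∀ i, stackD2 Qij B2 i = Qi i * Matrix.fromRows (Ri i) 0)
    (Q : Matrix ((i : Fin m) × Fin (s i)) (Fin p ⊕ Fin t) ℝ)
    (hQ : Qᵀ * Q = 1)
    (R : Matrix (Fin p) (Fin p) ℝ)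
    (hQR : stackC2 Qi Qij B1 = Q * Matrix.fromRows R 0)
    :
    IsUnit ((threeLevelB B1 B2 B3)ᵀ * threeLevelB B1 B2 B3).det ∧
      (((threeLevelB B1 B2 B3)ᵀ * threeLevelB B1 B2 B3)⁻¹).submatrix
          Sum.inl Sum.inl = R⁻¹ * (Rᵀ)⁻¹ := by
  have hA : IsUnit ((threeLevelB B1 B2 B3)ᵀ * threeLevelB B1 B2 B3).det :=
    isUnit_det_of_rank_eq_card (by rw [rank_transpose_mul_self, hrank])
  refine ⟨hA, ?_⟩
  rw [ThreeLevelLS.transpose_mul_self_threeLevelB_eq_fromRows Qij Qi B1 B2 B3 hQij hQij'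
    hQRij hQi hQi' hQRi hQ hQR] at hA ⊢
  exact toBlocks₁₁_inv_transpose_mul_self_fromRows_fromCols_zero hA

theorem threeLevelLS_inverse_block11 {p q₁ q₂ m t : ℕ} {n : Fin m → ℕ}
    {k : (i : Fin m) → Fin (n i) → ℕ} {s : Fin m → ℕ}
    (hp : 0 < p) (hq₁ : 0 < q₁) (hq₂ : 0 < q₂) (hm : 0 < m) (hn : ∀ i, 0 < n i)
    (B1 : (i : Fin m) → (j : Fin (n i)) → Matrix (Fin q₂ ⊕ Fin (k i j)) (Fin p) ℝ)
    (B2 : (i : Fin m) → (j : Fin (n i)) → Matrix (Fin q₂ ⊕ Fin (k i j)) (Fin q₁) ℝ)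
    (B3 : (i : Fin m) → (j : Fin (n i)) → Matrix (Fin q₂ ⊕ Fin (k i j)) (Fin q₂) ℝ)
    (hrank : (threeLevelB B1 B2 B3).rank =
      Fintype.card (Fin p ⊕ (Σ i : Fin m, Fin q₁ ⊕ (Fin (n i) × Fin q₂))))
    (Qij : (i : Fin m) → (j : Fin (n i)) →
      Matrix (Fin q₂ ⊕ Fin (k i j)) (Fin q₂ ⊕ Fin (k i j)) ℝ)
    (hQij : ∀ i j, (Qij i j)ᵀ * Qij i j = 1) (hQij' : ∀ i j, Qij i j * (Qij i j)ᵀ = 1)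
    (Rij : (i : Fin m) → (j : Fin (n i)) → Matrix (Fin q₂) (Fin q₂) ℝ)
    (hRijtri : ∀ i j, (Rij i j).BlockTriangular id)
    (hRij : ∀ i j, IsUnit (Rij i j).det)
    (hQRij : ∀ i j, B3 i j = Qij i j * Matrix.fromRows (Rij i j) 0)
    (Qi : (i : Fin m) → Matrix ((j : Fin (n i)) × Fin (k i j)) (Fin q₁ ⊕ Fin (s i)) ℝ)
    (hQi : ∀ i, (Qi i)ᵀ * Qi i = 1) (hQi' : ∀ i, Qi i * (Qi i)ᵀ = 1)
    (Ri : (i : Fin m) → Matrix (Fin q₁) (Fin q₁) ℝ)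
    (hRitri : ∀ i, (Ri i).BlockTriangular id)
    (hRi : ∀ i, IsUnit (Ri i).det)
    (hQRi : ∀ i, stackD2 Qij B2 i = Qi i * Matrix.fromRows (Ri i) 0)
    (Q : Matrix ((i : Fin m) × Fin (s i)) (Fin p ⊕ Fin t) ℝ)
    (hQ : Qᵀ * Q = 1) (hQ' : Q * Qᵀ = 1)
    (R : Matrix (Fin p) (Fin p) ℝ)
    (hRtri : R.BlockTriangular id) (hR : IsUnit R.det)
    (hQR : stackC2 Qi Qij B1 = Q * Matrix.fromRows R 0)
    :
    IsUnit ((threeLevelB B1 B2 B3)ᵀ * threeLevelB B1 B2 B3).det ∧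
      (((threeLevelB B1 B2 B3)ᵀ * threeLevelB B1 B2 B3)⁻¹).submatrix
          Sum.inl Sum.inl = R⁻¹ * (Rᵀ)⁻¹ :=
  threeLevelLS_inverse_block11_general B1 B2 B3 hrank Qij hQij hQij' Rij hQRij Qi hQi hQi' Ri hQRi Q
    hQ R hQR
end

section
/- In the three-level least squares setting with the given QR decompositions, for each 1 ≤ i ≤ m and 1 ≤ j ≤ nᵢ the sub-blocks of A⁻¹ satisfy A¹²ᶦʲ = −( Rᵢⱼ⁻¹ ( D₁ᵢⱼ A¹¹ + D̊₁ᵢⱼ (A¹²ᶦ)ᵀ ) )ᵀ, A¹²⁽ⁱ⁾⁽ʲ⁾ = −( Rᵢⱼ⁻¹ ( D₁ᵢⱼ A¹²ᶦ + D̊₁ᵢⱼ A²²ᶦ ) )ᵀ, and A²²ᶦʲ = Rᵢⱼ⁻¹ ( Rᵢⱼ⁻ᵀ − D₁ᵢⱼ A¹²ᶦʲ − D̊₁ᵢⱼ A¹²⁽ⁱ⁾⁽ʲ⁾ ). -/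
/-!
Write `A = BᵀB` and `X = A⁻¹`. In column block `(i,j)` of level 3 the only nonzero block of `B`
is `B̊̊ᵢⱼ`, so row block `(i,j)` of `A X = 1` reads
`B̊̊ᵢⱼᵀ (Bᵢⱼ X₁ + B̊ᵢⱼ X₂ + B̊̊ᵢⱼ X₃) = E`, with `X₁, X₂, X₃` the block rows of `X` at the
first level, at group `i` and at `(i,j)`, and `E` the corresponding block row of the identity.
From `B̊̊ᵢⱼ = Qᵢⱼ [Rᵢⱼ; 0]` we get `B̊̊ᵢⱼᵀ M = Rᵢⱼᵀ (first q₂ rows of Qᵢⱼᵀ M)`, so this is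
`Rᵢⱼᵀ (D₁ᵢⱼ X₁ + D̊₁ᵢⱼ X₂ + Rᵢⱼ X₃) = E`, which is solved for `X₃` since `Rᵢⱼ` is invertible.
Reading the solution in the column blocks of levels 1, 2 and 3, where `E` is `0`, `0` and `1`,
and using the symmetry of `X`, gives the three formulas.
-/

open Matrix

theorem Matrix.isUnit_of_rank_eq_card {K ι : Type*} [Field K] [Fintype ι] [DecidableEq ι]
    {A : Matrix ι ι K} (h : A.rank = Fintype.card ι) : IsUnit A := by
  rw [← mulVec_surjective_iff_isUnit]
  have hrange : LinearMap.range A.mulVecLin = ⊤ :=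
    Submodule.eq_top_of_finrank_eq (by rwa [Module.finrank_fintype_fun_eq_card])
  exact LinearMap.range_eq_top.mp hrange

section QR

-- The ascription `(0 : Matrix b c R)` below stops `*` from being elaborated through `CStarMatrix`.

variable {R o a b c γ : Type*} [CommSemiring R] [Fintype o] [Fintype a] [Fintype b]
  {B : Matrix o c R} {Q : Matrix o (a ⊕ b) R} {T : Matrix a c R}

theorem Matrix.transpose_mul_eq_of_eq_mul_fromRows (h : B = Q * fromRows T (0 : Matrix b c R))
    (M : Matrix o γ R) : Bᵀ * M = Tᵀ * (Qᵀ * M).submatrix Sum.inl id := by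
  rw [h, transpose_mul, transpose_fromRows, transpose_zero, Matrix.mul_assoc,
    ← fromRows_toRows (Qᵀ * M), fromCols_mul_fromRows, Matrix.zero_mul, add_zero]
  rfl

theorem Matrix.transpose_mul_self_eq_of_eq_mul_fromRows [DecidableEq a] [DecidableEq b]
    (hQ : Qᵀ * Q = 1) (h : B = Q * fromRows T (0 : Matrix b c R)) : Bᵀ * B = Tᵀ * T := by
  rw [transpose_mul_eq_of_eq_mul_fromRows h, h, ← Matrix.mul_assoc, hQ, Matrix.one_mul]
  rfl

end QR

theorem Matrix.eq_inv_mul_of_transpose_mul_add_mul_eq {K n γ : Type*} [CommRing K] [Fintype n]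
    [DecidableEq n] {T : Matrix n n K} (hT : IsUnit T.det) {X Y E : Matrix n γ K}
    (h : Tᵀ * (Y + T * X) = E) : X = T⁻¹ * ((Tᵀ)⁻¹ * E - Y) := by
  have hTt : IsUnit Tᵀ.det := by rwa [det_transpose]
  rw [← h, ← Matrix.mul_assoc, nonsing_inv_mul _ hTt, Matrix.one_mul, add_sub_cancel_left,
    ← Matrix.mul_assoc, nonsing_inv_mul _ hT, Matrix.one_mul]

theorem Matrix.IsSymm.submatrix_eq_transpose {α l n o : Type*} {A : Matrix n n α}
    (hA : A.IsSymm) (f : l → n) (g : o → n) : A.submatrix f g = (A.submatrix g f)ᵀ := by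
  rw [transpose_submatrix, hA.eq]

theorem Matrix.submatrix_one_eq_zero {α l n o : Type*} [Zero α] [One α] [DecidableEq n]
    {f : l → n} {g : o → n} (h : ∀ a b, f a ≠ g b) : (1 : Matrix n n α).submatrix f g = 0 := by
  ext a b
  exact one_apply_ne (h a b)

section ThreeLevel

variable {p q₁ q₂ m : ℕ} {n : Fin m → ℕ} {k : (i : Fin m) → Fin (n i) → ℕ}
  (B1 : (i : Fin m) → (j : Fin (n i)) → Matrix (Fin q₂ ⊕ Fin (k i j)) (Fin p) ℝ)
  (B2 : (i : Fin m) → (j : Fin (n i)) → Matrix (Fin q₂ ⊕ Fin (k i j)) (Fin q₁) ℝ)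
  (B3 : (i : Fin m) → (j : Fin (n i)) → Matrix (Fin q₂ ⊕ Fin (k i j)) (Fin q₂) ℝ)
  {γ κ : Type*} (i : Fin m) (j : Fin (n i))

theorem threeLevelB_mul_submatrix_rowBlock (g : κ → γ)
    (X : Matrix (Fin p ⊕ (Σ i : Fin m, Fin q₁ ⊕ (Fin (n i) × Fin q₂))) γ ℝ) :
    (threeLevelB B1 B2 B3 * X).submatrix (fun e => ⟨i, j, e⟩) g =
      B1 i j * X.submatrix Sum.inl g
        + B2 i j * X.submatrix (fun b => Sum.inr ⟨i, Sum.inl b⟩) g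
        + B3 i j * X.submatrix (fun b => Sum.inr ⟨i, Sum.inr (j, b)⟩) g := by
  ext e c
  simp only [submatrix_apply, mul_apply, threeLevelB, of_apply, Matrix.add_apply,
    Fintype.sum_sum_type, Fintype.sum_sigma]
  rw [Fintype.sum_eq_single i fun x hx => by simp [Ne.symm hx]]
  simp [Fintype.sum_prod_type, add_assoc]

theorem threeLevelB_transpose_mul_submatrix_level3 (g : κ → γ)
    (Y : Matrix ((i : Fin m) × ((j : Fin (n i)) × (Fin q₂ ⊕ Fin (k i j)))) γ ℝ) :
    ((threeLevelB B1 B2 B3)ᵀ * Y).submatrix (fun a => Sum.inr ⟨i, Sum.inr (j, a)⟩) g =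
      (B3 i j)ᵀ * Y.submatrix (fun e => ⟨i, j, e⟩) g := by
  ext a c
  simp only [submatrix_apply, mul_apply, transpose_apply, threeLevelB, of_apply,
    Fintype.sum_sigma]
  rw [Fintype.sum_eq_single i fun x hx => by simp [hx]]
  rw [Fintype.sum_eq_single j fun y hy => by simp [hy]]
  simp

theorem threeLevelB_gram_mul_submatrix_level3
    (Qij : (i : Fin m) → (j : Fin (n i)) →
      Matrix (Fin q₂ ⊕ Fin (k i j)) (Fin q₂ ⊕ Fin (k i j)) ℝ)
    (Rij : (i : Fin m) → (j : Fin (n i)) → Matrix (Fin q₂) (Fin q₂) ℝ)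
    (hQij : (Qij i j)ᵀ * Qij i j = 1) (hQRij : B3 i j = Qij i j * Matrix.fromRows (Rij i j) 0)
    (g : κ → γ) (X : Matrix (Fin p ⊕ (Σ i : Fin m, Fin q₁ ⊕ (Fin (n i) × Fin q₂))) γ ℝ) :
    ((threeLevelB B1 B2 B3)ᵀ * threeLevelB B1 B2 B3 * X).submatrix
        (fun a => Sum.inr ⟨i, Sum.inr (j, a)⟩) g =
      (Rij i j)ᵀ * (D1 Qij B1 i j * X.submatrix Sum.inl g
        + D1 Qij B2 i j * X.submatrix (fun b => Sum.inr ⟨i, Sum.inl b⟩) g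
        + Rij i j * X.submatrix (fun b => Sum.inr ⟨i, Sum.inr (j, b)⟩) g) := by
  have h1 : (B3 i j)ᵀ * B1 i j = (Rij i j)ᵀ * D1 Qij B1 i j :=
    transpose_mul_eq_of_eq_mul_fromRows hQRij _
  have h2 : (B3 i j)ᵀ * B2 i j = (Rij i j)ᵀ * D1 Qij B2 i j :=
    transpose_mul_eq_of_eq_mul_fromRows hQRij _
  have h3 : (B3 i j)ᵀ * B3 i j = (Rij i j)ᵀ * Rij i j :=
    transpose_mul_self_eq_of_eq_mul_fromRows hQij hQRij
  rw [Matrix.mul_assoc, threeLevelB_transpose_mul_submatrix_level3,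
    threeLevelB_mul_submatrix_rowBlock]
  simp only [Matrix.mul_add, ← Matrix.mul_assoc, h1, h2, h3]

theorem threeLevelB_gram_inv_submatrix_level3
    (Qij : (i : Fin m) → (j : Fin (n i)) →
      Matrix (Fin q₂ ⊕ Fin (k i j)) (Fin q₂ ⊕ Fin (k i j)) ℝ)
    (Rij : (i : Fin m) → (j : Fin (n i)) → Matrix (Fin q₂) (Fin q₂) ℝ)
    (hQij : (Qij i j)ᵀ * Qij i j = 1) (hRij : IsUnit (Rij i j).det)
    (hQRij : B3 i j = Qij i j * Matrix.fromRows (Rij i j) 0)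
    (hA : IsUnit ((threeLevelB B1 B2 B3)ᵀ * threeLevelB B1 B2 B3).det)
    (g : κ → Fin p ⊕ (Σ i : Fin m, Fin q₁ ⊕ (Fin (n i) × Fin q₂))) :
    ((threeLevelB B1 B2 B3)ᵀ * threeLevelB B1 B2 B3)⁻¹.submatrix
        (fun a => Sum.inr ⟨i, Sum.inr (j, a)⟩) g =
      (Rij i j)⁻¹ * (((Rij i j)ᵀ)⁻¹
          * (1 : Matrix (Fin p ⊕ (Σ i : Fin m, Fin q₁ ⊕ (Fin (n i) × Fin q₂))) _ ℝ).submatrix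
            (fun a => Sum.inr ⟨i, Sum.inr (j, a)⟩) g
        - D1 Qij B1 i j * ((threeLevelB B1 B2 B3)ᵀ * threeLevelB B1 B2 B3)⁻¹.submatrix Sum.inl g
        - D1 Qij B2 i j * ((threeLevelB B1 B2 B3)ᵀ * threeLevelB B1 B2 B3)⁻¹.submatrix
            (fun b => Sum.inr ⟨i, Sum.inl b⟩) g) := by
  rw [sub_sub]
  refine eq_inv_mul_of_transpose_mul_add_mul_eq hRij ?_
  rw [← mul_nonsing_inv _ hA,
    threeLevelB_gram_mul_submatrix_level3 B1 B2 B3 i j Qij Rij hQij hQRij g]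

end ThreeLevel

theorem threeLevelLS_inverse_level3_blocks_general {p q₁ q₂ m : ℕ} {n : Fin m → ℕ}
    {k : (i : Fin m) → Fin (n i) → ℕ}
    (B1 : (i : Fin m) → (j : Fin (n i)) → Matrix (Fin q₂ ⊕ Fin (k i j)) (Fin p) ℝ)
    (B2 : (i : Fin m) → (j : Fin (n i)) → Matrix (Fin q₂ ⊕ Fin (k i j)) (Fin q₁) ℝ)
    (B3 : (i : Fin m) → (j : Fin (n i)) → Matrix (Fin q₂ ⊕ Fin (k i j)) (Fin q₂) ℝ)
    (hrank : (threeLevelB B1 B2 B3).rank =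
      Fintype.card (Fin p ⊕ (Σ i : Fin m, Fin q₁ ⊕ (Fin (n i) × Fin q₂))))
    (Qij : (i : Fin m) → (j : Fin (n i)) →
      Matrix (Fin q₂ ⊕ Fin (k i j)) (Fin q₂ ⊕ Fin (k i j)) ℝ)
    (hQij : ∀ i j, (Qij i j)ᵀ * Qij i j = 1)
    (Rij : (i : Fin m) → (j : Fin (n i)) → Matrix (Fin q₂) (Fin q₂) ℝ)
    (hRij : ∀ i j, IsUnit (Rij i j).det)
    (hQRij : ∀ i j, B3 i j = Qij i j * Matrix.fromRows (Rij i j) 0)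
    :
    ∀ (i : Fin m) (j : Fin (n i)),
      (((threeLevelB B1 B2 B3)ᵀ * threeLevelB B1 B2 B3)⁻¹).submatrix
          Sum.inl (fun b => Sum.inr ⟨i, Sum.inr (j, b)⟩) =
        -((Rij i j)⁻¹ *
            (D1 Qij B1 i j *
              (((threeLevelB B1 B2 B3)ᵀ * threeLevelB B1 B2 B3)⁻¹).submatrix
                Sum.inl Sum.inl +
             D1 Qij B2 i j *
              ((((threeLevelB B1 B2 B3)ᵀ * threeLevelB B1 B2 B3)⁻¹).submatrix
                Sum.inl (fun b => Sum.inr ⟨i, Sum.inl b⟩))ᵀ))ᵀ ∧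
      (((threeLevelB B1 B2 B3)ᵀ * threeLevelB B1 B2 B3)⁻¹).submatrix
          (fun a => Sum.inr ⟨i, Sum.inl a⟩) (fun b => Sum.inr ⟨i, Sum.inr (j, b)⟩) =
        -((Rij i j)⁻¹ *
            (D1 Qij B1 i j *
              (((threeLevelB B1 B2 B3)ᵀ * threeLevelB B1 B2 B3)⁻¹).submatrix
                Sum.inl (fun b => Sum.inr ⟨i, Sum.inl b⟩) +
             D1 Qij B2 i j *
              (((threeLevelB B1 B2 B3)ᵀ * threeLevelB B1 B2 B3)⁻¹).submatrix
                (fun a => Sum.inr ⟨i, Sum.inl a⟩) (fun b => Sum.inr ⟨i, Sum.inl b⟩)))ᵀ ∧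
      (((threeLevelB B1 B2 B3)ᵀ * threeLevelB B1 B2 B3)⁻¹).submatrix
          (fun a => Sum.inr ⟨i, Sum.inr (j, a)⟩) (fun b => Sum.inr ⟨i, Sum.inr (j, b)⟩) =
        (Rij i j)⁻¹ *
          (((Rij i j)ᵀ)⁻¹
            - D1 Qij B1 i j *
              (((threeLevelB B1 B2 B3)ᵀ * threeLevelB B1 B2 B3)⁻¹).submatrix
                Sum.inl (fun b => Sum.inr ⟨i, Sum.inr (j, b)⟩)
            - D1 Qij B2 i j *
              (((threeLevelB B1 B2 B3)ᵀ * threeLevelB B1 B2 B3)⁻¹).submatrix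
                (fun a => Sum.inr ⟨i, Sum.inl a⟩) (fun b => Sum.inr ⟨i, Sum.inr (j, b)⟩)) := by
  intro i j
  set B := threeLevelB B1 B2 B3
  have hA : IsUnit (Bᵀ * B).det := (isUnit_iff_isUnit_det _).mp <|
    isUnit_of_rank_eq_card (by rwa [rank_transpose_mul_self])
  have hsymm : ((Bᵀ * B)⁻¹).IsSymm := by
    rw [IsSymm, transpose_nonsing_inv, transpose_mul, transpose_transpose]
  have hlevel3 {κ : Type} (g : κ → _) := threeLevelB_gram_inv_submatrix_level3 B1 B2 B3 i j
    Qij Rij (hQij i j) (hRij i j) (hQRij i j) hA g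
  refine ⟨?_, ?_, ?_⟩
  · rw [hsymm.submatrix_eq_transpose Sum.inl, hlevel3, submatrix_one_eq_zero (by simp),
      ← hsymm.submatrix_eq_transpose _ Sum.inl, Matrix.mul_zero, zero_sub, sub_eq_add_neg,
      ← neg_add, Matrix.mul_neg, transpose_neg]
  · rw [hsymm.submatrix_eq_transpose (fun a => Sum.inr ⟨i, Sum.inl a⟩), hlevel3,
      submatrix_one_eq_zero (by simp), Matrix.mul_zero, zero_sub, sub_eq_add_neg, ← neg_add,
      Matrix.mul_neg, transpose_neg]
  · rw [hlevel3, submatrix_one _ fun a b h => by simpa using h, Matrix.mul_one]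

theorem threeLevelLS_inverse_level3_blocks {p q₁ q₂ m t : ℕ} {n : Fin m → ℕ}
    {k : (i : Fin m) → Fin (n i) → ℕ} {s : Fin m → ℕ}
    (hp : 0 < p) (hq₁ : 0 < q₁) (hq₂ : 0 < q₂) (hm : 0 < m) (hn : ∀ i, 0 < n i)
    (B1 : (i : Fin m) → (j : Fin (n i)) → Matrix (Fin q₂ ⊕ Fin (k i j)) (Fin p) ℝ)
    (B2 : (i : Fin m) → (j : Fin (n i)) → Matrix (Fin q₂ ⊕ Fin (k i j)) (Fin q₁) ℝ)
    (B3 : (i : Fin m) → (j : Fin (n i)) → Matrix (Fin q₂ ⊕ Fin (k i j)) (Fin q₂) ℝ)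
    (hrank : (threeLevelB B1 B2 B3).rank =
      Fintype.card (Fin p ⊕ (Σ i : Fin m, Fin q₁ ⊕ (Fin (n i) × Fin q₂))))
    (Qij : (i : Fin m) → (j : Fin (n i)) →
      Matrix (Fin q₂ ⊕ Fin (k i j)) (Fin q₂ ⊕ Fin (k i j)) ℝ)
    (hQij : ∀ i j, (Qij i j)ᵀ * Qij i j = 1) (hQij' : ∀ i j, Qij i j * (Qij i j)ᵀ = 1)
    (Rij : (i : Fin m) → (j : Fin (n i)) → Matrix (Fin q₂) (Fin q₂) ℝ)
    (hRijtri : ∀ i j, (Rij i j).BlockTriangular id)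
    (hRij : ∀ i j, IsUnit (Rij i j).det)
    (hQRij : ∀ i j, B3 i j = Qij i j * Matrix.fromRows (Rij i j) 0)
    (Qi : (i : Fin m) → Matrix ((j : Fin (n i)) × Fin (k i j)) (Fin q₁ ⊕ Fin (s i)) ℝ)
    (hQi : ∀ i, (Qi i)ᵀ * Qi i = 1) (hQi' : ∀ i, Qi i * (Qi i)ᵀ = 1)
    (Ri : (i : Fin m) → Matrix (Fin q₁) (Fin q₁) ℝ)
    (hRitri : ∀ i, (Ri i).BlockTriangular id)
    (hRi : ∀ i, IsUnit (Ri i).det)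
    (hQRi : ∀ i, stackD2 Qij B2 i = Qi i * Matrix.fromRows (Ri i) 0)
    (Q : Matrix ((i : Fin m) × Fin (s i)) (Fin p ⊕ Fin t) ℝ)
    (hQ : Qᵀ * Q = 1) (hQ' : Q * Qᵀ = 1)
    (R : Matrix (Fin p) (Fin p) ℝ)
    (hRtri : R.BlockTriangular id) (hR : IsUnit R.det)
    (hQR : stackC2 Qi Qij B1 = Q * Matrix.fromRows R 0)
    :
    ∀ (i : Fin m) (j : Fin (n i)),
      (((threeLevelB B1 B2 B3)ᵀ * threeLevelB B1 B2 B3)⁻¹).submatrix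
          Sum.inl (fun b => Sum.inr ⟨i, Sum.inr (j, b)⟩) =
        -((Rij i j)⁻¹ *
            (D1 Qij B1 i j *
              (((threeLevelB B1 B2 B3)ᵀ * threeLevelB B1 B2 B3)⁻¹).submatrix
                Sum.inl Sum.inl +
             D1 Qij B2 i j *
              ((((threeLevelB B1 B2 B3)ᵀ * threeLevelB B1 B2 B3)⁻¹).submatrix
                Sum.inl (fun b => Sum.inr ⟨i, Sum.inl b⟩))ᵀ))ᵀ ∧
      (((threeLevelB B1 B2 B3)ᵀ * threeLevelB B1 B2 B3)⁻¹).submatrix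
          (fun a => Sum.inr ⟨i, Sum.inl a⟩) (fun b => Sum.inr ⟨i, Sum.inr (j, b)⟩) =
        -((Rij i j)⁻¹ *
            (D1 Qij B1 i j *
              (((threeLevelB B1 B2 B3)ᵀ * threeLevelB B1 B2 B3)⁻¹).submatrix
                Sum.inl (fun b => Sum.inr ⟨i, Sum.inl b⟩) +
             D1 Qij B2 i j *
              (((threeLevelB B1 B2 B3)ᵀ * threeLevelB B1 B2 B3)⁻¹).submatrix
                (fun a => Sum.inr ⟨i, Sum.inl a⟩) (fun b => Sum.inr ⟨i, Sum.inl b⟩)))ᵀ ∧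
      (((threeLevelB B1 B2 B3)ᵀ * threeLevelB B1 B2 B3)⁻¹).submatrix
          (fun a => Sum.inr ⟨i, Sum.inr (j, a)⟩) (fun b => Sum.inr ⟨i, Sum.inr (j, b)⟩) =
        (Rij i j)⁻¹ *
          (((Rij i j)ᵀ)⁻¹
            - D1 Qij B1 i j *
              (((threeLevelB B1 B2 B3)ᵀ * threeLevelB B1 B2 B3)⁻¹).submatrix
                Sum.inl (fun b => Sum.inr ⟨i, Sum.inr (j, b)⟩)
            - D1 Qij B2 i j *
              (((threeLevelB B1 B2 B3)ᵀ * threeLevelB B1 B2 B3)⁻¹).submatrix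
                (fun a => Sum.inr ⟨i, Sum.inl a⟩) (fun b => Sum.inr ⟨i, Sum.inr (j, b)⟩)) :=
  threeLevelLS_inverse_level3_blocks_general B1 B2 B3 hrank Qij hQij Rij hRij hQRij
end

section
/- In the three-level least squares setting with the given QR decompositions, if x satisfies A x = Bᵀ b, where x is partitioned into a p-block x₁, q₁-blocks x₂,ᵢ and q₂-blocks x₂,ᵢⱼ, then x₁ = R⁻¹ c, x₂,ᵢ = Rᵢ⁻¹ (c₁ᵢ − C₁ᵢ x₁) for all 1 ≤ i ≤ m, and x₂,ᵢⱼ = Rᵢⱼ⁻¹ (d₁ᵢⱼ − D₁ᵢⱼ x₁ − D̊₁ᵢⱼ x₂,ᵢ) for all 1 ≤ i ≤ m, 1 ≤ j ≤ nᵢ. -/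
open Matrix

/-!
Write `rᵢⱼ` for the residual of row block `(i,j)`. The normal equations `Bᵀ (B x - b) = 0` say
`B̊̊ᵢⱼᵀ rᵢⱼ = 0`, `∑ⱼ B̊ᵢⱼᵀ rᵢⱼ = 0` and `∑ᵢⱼ Bᵢⱼᵀ rᵢⱼ = 0`. As `B̊̊ᵢⱼ = Qᵢⱼ [Rᵢⱼ; 0]`, the first
equation kills the top `q₂` entries of `Qᵢⱼᵀ rᵢⱼ`, which is the triangular system for `x₂,ᵢⱼ`.
Moreover `Nᵀ rᵢⱼ = (Qᵢⱼᵀ N)₂ᵀ (Qᵢⱼᵀ rᵢⱼ)₂` for every `N`, so after stacking over `j` the other two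
equations are the normal equations of the reduced two-level problem with blocks `D₂ᵢⱼ, D̊₂ᵢⱼ`
and data `d₂ᵢⱼ`. The same step with `Qᵢ` gives `x₂,ᵢ` and a one-level problem, and `Q` gives `x₁`.
-/

section QR

variable {α ι κ γ : Type*} [Fintype α] [Fintype ι] [Fintype κ]
  {Q : Matrix α (ι ⊕ κ) ℝ} {R : Matrix ι ι ℝ} {S : Matrix α ι ℝ}

lemma transpose_mulVec_eq_add_submatrix (M : Matrix (ι ⊕ κ) γ ℝ) (v : ι ⊕ κ → ℝ) :
    Mᵀ *ᵥ v = (M.submatrix Sum.inl id)ᵀ *ᵥ (v ∘ Sum.inl)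
      + (M.submatrix Sum.inr id)ᵀ *ᵥ (v ∘ Sum.inr) := by
  ext c
  simp [mulVec, dotProduct, Fintype.sum_sum_type]

lemma qr_transpose_mulVec (hS : S = Q * fromRows R (0 : Matrix κ ι ℝ)) (y : α → ℝ) :
    Sᵀ *ᵥ y = Rᵀ *ᵥ ((Qᵀ *ᵥ y) ∘ Sum.inl) := by
  rw [hS, transpose_mul, ← mulVec_mulVec, transpose_fromRows, transpose_zero,
    fromCols_mulVec, zero_mulVec, add_zero]

variable [DecidableEq ι]

lemma eq_inv_mulVec_of_mulVec_eq (hR : IsUnit R.det) {w v : ι → ℝ}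
    (h : R *ᵥ w = v) : w = R⁻¹ *ᵥ v := by
  rw [← h, mulVec_mulVec, nonsing_inv_mul R hR, one_mulVec]

lemma qr_top_eq_zero (hS : S = Q * fromRows R (0 : Matrix κ ι ℝ)) (hR : IsUnit R.det)
    {y : α → ℝ} (h : Sᵀ *ᵥ y = 0) : (Qᵀ *ᵥ y) ∘ Sum.inl = 0 :=
  mulVec_injective_of_isUnit ((isUnit_iff_isUnit_det _).2 (isUnit_det_transpose R hR))
    (by rw [← qr_transpose_mulVec hS, h, mulVec_zero])

variable [DecidableEq κ]

lemma transpose_mulVec_qr_residual (hS : S = Q * fromRows R (0 : Matrix κ ι ℝ))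
    (hQ : Qᵀ * Q = 1) (u d : α → ℝ) (w : ι → ℝ) :
    Qᵀ *ᵥ (u + S *ᵥ w - d) = Qᵀ *ᵥ (u - d) + Sum.elim (R *ᵥ w) 0 := by
  rw [hS, mulVec_sub, mulVec_add, mulVec_mulVec, ← Matrix.mul_assoc, hQ, Matrix.one_mul,
    fromRows_mulVec, zero_mulVec, mulVec_sub]
  abel

variable {u d : α → ℝ} {w : ι → ℝ}

lemma eq_inv_mulVec_of_qr_normal_eq (hS : S = Q * fromRows R (0 : Matrix κ ι ℝ))
    (hQ : Qᵀ * Q = 1) (hR : IsUnit R.det) (h : Sᵀ *ᵥ (u + S *ᵥ w - d) = 0) :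
    w = R⁻¹ *ᵥ ((Qᵀ *ᵥ (d - u)) ∘ Sum.inl) := by
  refine eq_inv_mulVec_of_mulVec_eq hR (funext fun a => ?_)
  have htop := congrFun (qr_top_eq_zero hS hR h) a
  rw [Function.comp_apply, transpose_mulVec_qr_residual hS hQ, mulVec_sub] at htop
  simp only [Pi.add_apply, Pi.sub_apply, Sum.elim_inl, Pi.zero_apply] at htop
  simp only [Function.comp_apply, mulVec_sub, Pi.sub_apply]
  linarith

lemma transpose_mulVec_eq_of_qr_normal_eq [DecidableEq α]
    (hS : S = Q * fromRows R (0 : Matrix κ ι ℝ)) (hQ : Qᵀ * Q = 1) (hQ' : Q * Qᵀ = 1)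
    (hR : IsUnit R.det) (h : Sᵀ *ᵥ (u + S *ᵥ w - d) = 0) (N : Matrix α γ ℝ) :
    Nᵀ *ᵥ (u + S *ᵥ w - d)
      = ((Qᵀ * N).submatrix Sum.inr id)ᵀ *ᵥ ((Qᵀ *ᵥ (u - d)) ∘ Sum.inr) := by
  have hN : Nᵀ = (Qᵀ * N)ᵀ * Qᵀ := by
    rw [transpose_mul, transpose_transpose, Matrix.mul_assoc, hQ', Matrix.mul_one]
  rw [hN, ← mulVec_mulVec, transpose_mulVec_eq_add_submatrix, qr_top_eq_zero hS hR h,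
    mulVec_zero, zero_add, transpose_mulVec_qr_residual hS hQ]
  congr 1
  ext a
  simp

end QR

lemma sigma_rows_transpose_mulVec {J γ : Type*} [Fintype J] {K : J → Type*}
    [∀ j, Fintype (K j)] (M : ∀ j, Matrix (K j) γ ℝ) (V : (Σ j, K j) → ℝ) :
    (Matrix.of fun v : Σ j, K j => M v.1 v.2)ᵀ *ᵥ V = ∑ j, (M j)ᵀ *ᵥ fun a => V ⟨j, a⟩ := by
  ext c
  simp [mulVec, dotProduct, ← Finset.univ_sigma_univ, Finset.sum_sigma, Finset.sum_apply]

lemma sum_transpose_mulVec_eq_of_qr_normal_eq {J ι γ : Type*} [Fintype J] [Fintype ι]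
    [DecidableEq ι] {α κ : J → Type*} [∀ j, Fintype (α j)] [∀ j, DecidableEq (α j)]
    [∀ j, Fintype (κ j)] [∀ j, DecidableEq (κ j)]
    {Q : ∀ j, Matrix (α j) (ι ⊕ κ j) ℝ} {R : J → Matrix ι ι ℝ} {S : ∀ j, Matrix (α j) ι ℝ}
    (hS : ∀ j, S j = Q j * fromRows (R j) (0 : Matrix (κ j) ι ℝ)) (hQ : ∀ j, (Q j)ᵀ * Q j = 1)
    (hQ' : ∀ j, Q j * (Q j)ᵀ = 1) (hR : ∀ j, IsUnit (R j).det)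
    {u d : ∀ j, α j → ℝ} {w : J → ι → ℝ} (h : ∀ j, (S j)ᵀ *ᵥ (u j + S j *ᵥ w j - d j) = 0)
    (N : ∀ j, Matrix (α j) γ ℝ) :
    ∑ j, (N j)ᵀ *ᵥ (u j + S j *ᵥ w j - d j)
      = (Matrix.of fun v : Σ j, κ j => ((Q v.1)ᵀ * N v.1) (Sum.inr v.2))ᵀ *ᵥ
          fun v => ((Q v.1)ᵀ *ᵥ (u v.1 - d v.1)) (Sum.inr v.2) := by
  refine (Finset.sum_congr rfl fun j _ =>
    transpose_mulVec_eq_of_qr_normal_eq (hS j) (hQ j) (hQ' j) (hR j) (h j) (N j)).trans ?_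
  exact (sigma_rows_transpose_mulVec (fun j => ((Q j)ᵀ * N j).submatrix Sum.inr id)
    fun v => ((Q v.1)ᵀ *ᵥ (u v.1 - d v.1)) (Sum.inr v.2)).symm

section ThreeLevel

variable {p q₁ q₂ m : ℕ} {n : Fin m → ℕ} {k : (i : Fin m) → Fin (n i) → ℕ}

def threeLevelResidual
    (B1 : (i : Fin m) → (j : Fin (n i)) → Matrix (Fin q₂ ⊕ Fin (k i j)) (Fin p) ℝ)
    (B2 : (i : Fin m) → (j : Fin (n i)) → Matrix (Fin q₂ ⊕ Fin (k i j)) (Fin q₁) ℝ)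
    (B3 : (i : Fin m) → (j : Fin (n i)) → Matrix (Fin q₂ ⊕ Fin (k i j)) (Fin q₂) ℝ)
    (b : (i : Fin m) → (j : Fin (n i)) → (Fin q₂ ⊕ Fin (k i j)) → ℝ)
    (x : (Fin p ⊕ (Σ i : Fin m, Fin q₁ ⊕ (Fin (n i) × Fin q₂))) → ℝ)
    (i : Fin m) (j : Fin (n i)) : Fin q₂ ⊕ Fin (k i j) → ℝ :=
  B1 i j *ᵥ (x ∘ Sum.inl) + B2 i j *ᵥ (fun a => x (Sum.inr ⟨i, Sum.inl a⟩))
    + B3 i j *ᵥ (fun a => x (Sum.inr ⟨i, Sum.inr (j, a)⟩)) - b i j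

variable {B1 : (i : Fin m) → (j : Fin (n i)) → Matrix (Fin q₂ ⊕ Fin (k i j)) (Fin p) ℝ}
  {B2 : (i : Fin m) → (j : Fin (n i)) → Matrix (Fin q₂ ⊕ Fin (k i j)) (Fin q₁) ℝ}
  {B3 : (i : Fin m) → (j : Fin (n i)) → Matrix (Fin q₂ ⊕ Fin (k i j)) (Fin q₂) ℝ}

lemma threeLevelB_mulVec_apply (x : (Fin p ⊕ (Σ i : Fin m, Fin q₁ ⊕ (Fin (n i) × Fin q₂))) → ℝ)
    (i : Fin m) (j : Fin (n i)) (a : Fin q₂ ⊕ Fin (k i j)) :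
    (threeLevelB B1 B2 B3 *ᵥ x) ⟨i, j, a⟩ =
      (B1 i j *ᵥ (x ∘ Sum.inl) + B2 i j *ᵥ (fun c => x (Sum.inr ⟨i, Sum.inl c⟩))
        + B3 i j *ᵥ (fun c => x (Sum.inr ⟨i, Sum.inr (j, c)⟩))) a := by
  simp only [mulVec, dotProduct, threeLevelB, of_apply, Fintype.sum_sum_type,
    ← Finset.univ_sigma_univ, Finset.sum_sigma, Fintype.sum_prod_type, ite_mul, zero_mul,
    Finset.sum_add_distrib, Finset.sum_ite_irrel, Finset.sum_const_zero, Finset.sum_ite_eq,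
    Finset.mem_univ, if_true]
  rw [Finset.sum_sigma']
  simp only [Finset.univ_sigma_univ, Sigma.eta, Finset.sum_ite_eq, Finset.mem_univ, if_true]
  rw [← add_assoc]
  rfl

lemma threeLevelB_mulVec_sub (b : (i : Fin m) → (j : Fin (n i)) → (Fin q₂ ⊕ Fin (k i j)) → ℝ)
    (x : (Fin p ⊕ (Σ i : Fin m, Fin q₁ ⊕ (Fin (n i) × Fin q₂))) → ℝ) :
    threeLevelB B1 B2 B3 *ᵥ x - (fun r => b r.1 r.2.1 r.2.2)
      = fun r => threeLevelResidual B1 B2 B3 b x r.1 r.2.1 r.2.2 := by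
  ext ⟨i, j, a⟩
  rw [Pi.sub_apply, threeLevelB_mulVec_apply]
  rfl

variable (w : ((i : Fin m) × ((j : Fin (n i)) × (Fin q₂ ⊕ Fin (k i j)))) → ℝ)

lemma threeLevelB_transpose_mulVec_inl (a : Fin p) :
    ((threeLevelB B1 B2 B3)ᵀ *ᵥ w) (Sum.inl a) =
      (∑ i, ∑ j, (B1 i j)ᵀ *ᵥ fun u => w ⟨i, j, u⟩) a := by
  simp only [mulVec, dotProduct, transpose_apply, threeLevelB, of_apply,
    ← Finset.univ_sigma_univ, Finset.sum_sigma, Finset.sum_apply]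

lemma threeLevelB_transpose_mulVec_inr_inl (i : Fin m) (c : Fin q₁) :
    ((threeLevelB B1 B2 B3)ᵀ *ᵥ w) (Sum.inr ⟨i, Sum.inl c⟩) =
      (∑ j, (B2 i j)ᵀ *ᵥ fun u => w ⟨i, j, u⟩) c := by
  simp only [mulVec, dotProduct, transpose_apply, threeLevelB, of_apply,
    ← Finset.univ_sigma_univ, Finset.sum_sigma, ite_mul, zero_mul, Finset.sum_ite_irrel,
    Finset.sum_const_zero, Finset.sum_ite_eq', Finset.mem_univ, if_true, Finset.sum_apply]

lemma threeLevelB_transpose_mulVec_inr_inr (i : Fin m) (j : Fin (n i)) (c : Fin q₂) :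
    ((threeLevelB B1 B2 B3)ᵀ *ᵥ w) (Sum.inr ⟨i, Sum.inr (j, c)⟩) =
      ((B3 i j)ᵀ *ᵥ fun u => w ⟨i, j, u⟩) c := by
  simp only [mulVec, dotProduct, transpose_apply, threeLevelB, of_apply,
    ← Finset.univ_sigma_univ, Finset.sum_sigma, ite_mul, zero_mul, Finset.sum_ite_irrel,
    Finset.sum_const_zero]
  rw [Finset.sum_sigma']
  simp only [Finset.univ_sigma_univ, Sigma.eta, Finset.sum_ite_eq', Finset.mem_univ, if_true]

lemma threeLevelB_normal_equations
    {b : (i : Fin m) → (j : Fin (n i)) → (Fin q₂ ⊕ Fin (k i j)) → ℝ}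
    {x : (Fin p ⊕ (Σ i : Fin m, Fin q₁ ⊕ (Fin (n i) × Fin q₂))) → ℝ}
    (hx : ((threeLevelB B1 B2 B3)ᵀ * threeLevelB B1 B2 B3) *ᵥ x =
      (threeLevelB B1 B2 B3)ᵀ *ᵥ (fun r => b r.1 r.2.1 r.2.2)) :
    (∑ i, ∑ j, (B1 i j)ᵀ *ᵥ threeLevelResidual B1 B2 B3 b x i j = 0) ∧
    (∀ i, ∑ j, (B2 i j)ᵀ *ᵥ threeLevelResidual B1 B2 B3 b x i j = 0) ∧
    ∀ i j, (B3 i j)ᵀ *ᵥ threeLevelResidual B1 B2 B3 b x i j = 0 := by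
  have h : (threeLevelB B1 B2 B3)ᵀ *ᵥ
      (fun r => threeLevelResidual B1 B2 B3 b x r.1 r.2.1 r.2.2) = 0 := by
    rw [← threeLevelB_mulVec_sub, mulVec_sub, mulVec_mulVec, hx, sub_self]
  refine ⟨funext fun a => ?_, fun i => funext fun c => ?_, fun i j => funext fun c => ?_⟩
  · simpa [threeLevelB_transpose_mulVec_inl] using congrFun h (Sum.inl a)
  · simpa [threeLevelB_transpose_mulVec_inr_inl] using congrFun h (Sum.inr ⟨i, Sum.inl c⟩)
  · simpa [threeLevelB_transpose_mulVec_inr_inr] using congrFun h (Sum.inr ⟨i, Sum.inr (j, c)⟩)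

end ThreeLevel

section Reduction

variable {p q₁ q₂ m P : ℕ} {n : Fin m → ℕ} {k : (i : Fin m) → Fin (n i) → ℕ} {s : Fin m → ℕ}
  {Qij : (i : Fin m) → (j : Fin (n i)) →
    Matrix (Fin q₂ ⊕ Fin (k i j)) (Fin q₂ ⊕ Fin (k i j)) ℝ}
  {Qi : (i : Fin m) → Matrix ((j : Fin (n i)) × Fin (k i j)) (Fin q₁ ⊕ Fin (s i)) ℝ}
  {B1 : (i : Fin m) → (j : Fin (n i)) → Matrix (Fin q₂ ⊕ Fin (k i j)) (Fin p) ℝ}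
  {B2 : (i : Fin m) → (j : Fin (n i)) → Matrix (Fin q₂ ⊕ Fin (k i j)) (Fin q₁) ℝ}

lemma D1_mulVec (M : (i : Fin m) → (j : Fin (n i)) → Matrix (Fin q₂ ⊕ Fin (k i j)) (Fin P) ℝ)
    (i : Fin m) (j : Fin (n i)) (v : Fin P → ℝ) :
    D1 Qij M i j *ᵥ v = ((Qij i j)ᵀ *ᵥ (M i j *ᵥ v)) ∘ Sum.inl := by
  rw [mulVec_mulVec]
  rfl

lemma C1_mulVec (M : (i : Fin m) → (j : Fin (n i)) → Matrix (Fin q₂ ⊕ Fin (k i j)) (Fin P) ℝ)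
    (i : Fin m) (v : Fin P → ℝ) :
    C1 Qi Qij M i *ᵥ v = ((Qi i)ᵀ *ᵥ (stackD2 Qij M i *ᵥ v)) ∘ Sum.inl := by
  rw [mulVec_mulVec]
  rfl

lemma stackD2_transpose_mulVec_of_normal_eq
    {Rij : (i : Fin m) → (j : Fin (n i)) → Matrix (Fin q₂) (Fin q₂) ℝ}
    {B3 : (i : Fin m) → (j : Fin (n i)) → Matrix (Fin q₂ ⊕ Fin (k i j)) (Fin q₂) ℝ} (i : Fin m)
    (hQij : ∀ j, (Qij i j)ᵀ * Qij i j = 1) (hQij' : ∀ j, Qij i j * (Qij i j)ᵀ = 1)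
    (hRij : ∀ j, IsUnit (Rij i j).det)
    (hQRij : ∀ j, B3 i j = Qij i j * fromRows (Rij i j) 0)
    {b : (j : Fin (n i)) → (Fin q₂ ⊕ Fin (k i j)) → ℝ} {v : Fin p → ℝ} {w : Fin q₁ → ℝ}
    {z : Fin (n i) → Fin q₂ → ℝ}
    (h : ∀ j, (B3 i j)ᵀ *ᵥ (B1 i j *ᵥ v + B2 i j *ᵥ w + B3 i j *ᵥ z j - b j) = 0)
    (N : (i : Fin m) → (j : Fin (n i)) → Matrix (Fin q₂ ⊕ Fin (k i j)) (Fin P) ℝ) :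
    (stackD2 Qij N i)ᵀ *ᵥ (stackD2 Qij B1 i *ᵥ v + stackD2 Qij B2 i *ᵥ w
        - fun u => ((Qij i u.1)ᵀ *ᵥ b u.1) (Sum.inr u.2))
      = ∑ j, (N i j)ᵀ *ᵥ (B1 i j *ᵥ v + B2 i j *ᵥ w + B3 i j *ᵥ z j - b j) := by
  have hres : stackD2 Qij B1 i *ᵥ v + stackD2 Qij B2 i *ᵥ w
        - (fun u => ((Qij i u.1)ᵀ *ᵥ b u.1) (Sum.inr u.2))
      = fun u => ((Qij i u.1)ᵀ *ᵥ (B1 i u.1 *ᵥ v + B2 i u.1 *ᵥ w - b u.1)) (Sum.inr u.2) := by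
    ext u
    simp only [Pi.sub_apply, Pi.add_apply, mulVec_sub, mulVec_add, mulVec_mulVec]
    rfl
  rw [hres]
  exact (sum_transpose_mulVec_eq_of_qr_normal_eq (u := fun j => B1 i j *ᵥ v + B2 i j *ᵥ w)
    hQRij hQij hQij' hRij h (N i)).symm

lemma stackC2_transpose_mulVec_of_normal_eq {Ri : (i : Fin m) → Matrix (Fin q₁) (Fin q₁) ℝ}
    (hQi : ∀ i, (Qi i)ᵀ * Qi i = 1) (hQi' : ∀ i, Qi i * (Qi i)ᵀ = 1)
    (hRi : ∀ i, IsUnit (Ri i).det)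
    (hQRi : ∀ i, stackD2 Qij B2 i = Qi i * fromRows (Ri i) 0)
    {d : (i : Fin m) → ((j : Fin (n i)) × Fin (k i j)) → ℝ} {v : Fin p → ℝ}
    {w : Fin m → Fin q₁ → ℝ}
    (h : ∀ i, (stackD2 Qij B2 i)ᵀ *ᵥ (stackD2 Qij B1 i *ᵥ v + stackD2 Qij B2 i *ᵥ w i - d i) = 0)
    (N : (i : Fin m) → (j : Fin (n i)) → Matrix (Fin q₂ ⊕ Fin (k i j)) (Fin P) ℝ) :
    (stackC2 Qi Qij N)ᵀ *ᵥ (stackC2 Qi Qij B1 *ᵥ v - fun r => ((Qi r.1)ᵀ *ᵥ d r.1) (Sum.inr r.2))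
      = ∑ i, (stackD2 Qij N i)ᵀ *ᵥ
          (stackD2 Qij B1 i *ᵥ v + stackD2 Qij B2 i *ᵥ w i - d i) := by
  have hres : stackC2 Qi Qij B1 *ᵥ v - (fun r => ((Qi r.1)ᵀ *ᵥ d r.1) (Sum.inr r.2))
      = fun r => ((Qi r.1)ᵀ *ᵥ (stackD2 Qij B1 r.1 *ᵥ v - d r.1)) (Sum.inr r.2) := by
    ext r
    simp only [Pi.sub_apply, mulVec_sub, mulVec_mulVec]
    rfl
  rw [hres]
  exact (sum_transpose_mulVec_eq_of_qr_normal_eq (u := fun i => stackD2 Qij B1 i *ᵥ v)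
    hQRi hQi hQi' hRi h (stackD2 Qij N)).symm

end Reduction

theorem threeLevelLS_linear_system_general {p q₁ q₂ m t : ℕ} {n : Fin m → ℕ}
    {k : (i : Fin m) → Fin (n i) → ℕ} {s : Fin m → ℕ}
    (B1 : (i : Fin m) → (j : Fin (n i)) → Matrix (Fin q₂ ⊕ Fin (k i j)) (Fin p) ℝ)
    (B2 : (i : Fin m) → (j : Fin (n i)) → Matrix (Fin q₂ ⊕ Fin (k i j)) (Fin q₁) ℝ)
    (B3 : (i : Fin m) → (j : Fin (n i)) → Matrix (Fin q₂ ⊕ Fin (k i j)) (Fin q₂) ℝ)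
    (Qij : (i : Fin m) → (j : Fin (n i)) →
      Matrix (Fin q₂ ⊕ Fin (k i j)) (Fin q₂ ⊕ Fin (k i j)) ℝ)
    (hQij : ∀ i j, (Qij i j)ᵀ * Qij i j = 1) (hQij' : ∀ i j, Qij i j * (Qij i j)ᵀ = 1)
    (Rij : (i : Fin m) → (j : Fin (n i)) → Matrix (Fin q₂) (Fin q₂) ℝ)
    (hRij : ∀ i j, IsUnit (Rij i j).det)
    (hQRij : ∀ i j, B3 i j = Qij i j * Matrix.fromRows (Rij i j) 0)
    (Qi : (i : Fin m) → Matrix ((j : Fin (n i)) × Fin (k i j)) (Fin q₁ ⊕ Fin (s i)) ℝ)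
    (hQi : ∀ i, (Qi i)ᵀ * Qi i = 1) (hQi' : ∀ i, Qi i * (Qi i)ᵀ = 1)
    (Ri : (i : Fin m) → Matrix (Fin q₁) (Fin q₁) ℝ)
    (hRi : ∀ i, IsUnit (Ri i).det)
    (hQRi : ∀ i, stackD2 Qij B2 i = Qi i * Matrix.fromRows (Ri i) 0)
    (Q : Matrix ((i : Fin m) × Fin (s i)) (Fin p ⊕ Fin t) ℝ)
    (hQ : Qᵀ * Q = 1)
    (R : Matrix (Fin p) (Fin p) ℝ)
    (hR : IsUnit R.det)
    (hQR : stackC2 Qi Qij B1 = Q * Matrix.fromRows R 0)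
    (b : (i : Fin m) → (j : Fin (n i)) → (Fin q₂ ⊕ Fin (k i j)) → ℝ)
    (x : (Fin p ⊕ (Σ i : Fin m, Fin q₁ ⊕ (Fin (n i) × Fin q₂))) → ℝ)
    (hx : ((threeLevelB B1 B2 B3)ᵀ * threeLevelB B1 B2 B3).mulVec x =
      (threeLevelB B1 B2 B3)ᵀ.mulVec (fun r => b r.1 r.2.1 r.2.2)) :
    (x ∘ Sum.inl) =
      R⁻¹.mulVec
        ((Qᵀ.mulVec fun r =>
          ((Qi r.1)ᵀ.mulVec fun u =>
            ((Qij r.1 u.1)ᵀ.mulVec (b r.1 u.1)) (Sum.inr u.2)) (Sum.inr r.2)) ∘ Sum.inl) ∧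
    (∀ i : Fin m,
      (fun a => x (Sum.inr ⟨i, Sum.inl a⟩)) =
        ((Ri i)⁻¹).mulVec
          ((((Qi i)ᵀ.mulVec fun u =>
              ((Qij i u.1)ᵀ.mulVec (b i u.1)) (Sum.inr u.2)) ∘ Sum.inl)
            - (C1 Qi Qij B1 i).mulVec (x ∘ Sum.inl))) ∧
    ∀ (i : Fin m) (j : Fin (n i)),
      (fun a => x (Sum.inr ⟨i, Sum.inr (j, a)⟩)) =
        ((Rij i j)⁻¹).mulVec
          ((((Qij i j)ᵀ.mulVec (b i j)) ∘ Sum.inl)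
            - (D1 Qij B1 i j).mulVec (x ∘ Sum.inl)
            - (D1 Qij B2 i j).mulVec (fun a => x (Sum.inr ⟨i, Sum.inl a⟩))) := by
  obtain ⟨h₁, h₂, h₃⟩ := threeLevelB_normal_equations hx
  have reduce₃ := fun {P : ℕ} i
      (N : (i : Fin m) → (j : Fin (n i)) → Matrix (Fin q₂ ⊕ Fin (k i j)) (Fin P) ℝ) =>
    stackD2_transpose_mulVec_of_normal_eq (B1 := B1) (B2 := B2) i (hQij i) (hQij' i) (hRij i)
      (hQRij i) (h₃ i) N
  have h₂' := fun i => (reduce₃ i B2).trans (h₂ i)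
  have h₁' : (stackC2 Qi Qij B1)ᵀ *ᵥ (0 + stackC2 Qi Qij B1 *ᵥ (x ∘ Sum.inl) - fun r =>
      ((Qi r.1)ᵀ *ᵥ fun u => ((Qij r.1 u.1)ᵀ *ᵥ b r.1 u.1) (Sum.inr u.2)) (Sum.inr r.2)) = 0 := by
    rw [zero_add, stackC2_transpose_mulVec_of_normal_eq hQi hQi' hRi hQRi h₂' B1, ← h₁]
    exact Finset.sum_congr rfl fun i _ => reduce₃ i B1
  refine ⟨?_, fun i => ?_, fun i j => ?_⟩
  · simpa only [sub_zero] using eq_inv_mulVec_of_qr_normal_eq hQR hQ hR h₁'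
  · rw [C1_mulVec, ← Pi.sub_comp, ← mulVec_sub]
    exact eq_inv_mulVec_of_qr_normal_eq (hQRi i) (hQi i) (hRi i) (h₂' i)
  · rw [D1_mulVec, D1_mulVec, ← Pi.sub_comp, ← Pi.sub_comp, ← mulVec_sub, ← mulVec_sub,
      sub_sub]
    exact eq_inv_mulVec_of_qr_normal_eq (hQRij i j) (hQij i j) (hRij i j) (h₃ i j)

theorem threeLevelLS_linear_system {p q₁ q₂ m t : ℕ} {n : Fin m → ℕ}
    {k : (i : Fin m) → Fin (n i) → ℕ} {s : Fin m → ℕ}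
    (hp : 0 < p) (hq₁ : 0 < q₁) (hq₂ : 0 < q₂) (hm : 0 < m) (hn : ∀ i, 0 < n i)
    (B1 : (i : Fin m) → (j : Fin (n i)) → Matrix (Fin q₂ ⊕ Fin (k i j)) (Fin p) ℝ)
    (B2 : (i : Fin m) → (j : Fin (n i)) → Matrix (Fin q₂ ⊕ Fin (k i j)) (Fin q₁) ℝ)
    (B3 : (i : Fin m) → (j : Fin (n i)) → Matrix (Fin q₂ ⊕ Fin (k i j)) (Fin q₂) ℝ)
    (hrank : (threeLevelB B1 B2 B3).rank =
      Fintype.card (Fin p ⊕ (Σ i : Fin m, Fin q₁ ⊕ (Fin (n i) × Fin q₂))))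
    (Qij : (i : Fin m) → (j : Fin (n i)) →
      Matrix (Fin q₂ ⊕ Fin (k i j)) (Fin q₂ ⊕ Fin (k i j)) ℝ)
    (hQij : ∀ i j, (Qij i j)ᵀ * Qij i j = 1) (hQij' : ∀ i j, Qij i j * (Qij i j)ᵀ = 1)
    (Rij : (i : Fin m) → (j : Fin (n i)) → Matrix (Fin q₂) (Fin q₂) ℝ)
    (hRijtri : ∀ i j, (Rij i j).BlockTriangular id)
    (hRij : ∀ i j, IsUnit (Rij i j).det)
    (hQRij : ∀ i j, B3 i j = Qij i j * Matrix.fromRows (Rij i j) 0)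
    (Qi : (i : Fin m) → Matrix ((j : Fin (n i)) × Fin (k i j)) (Fin q₁ ⊕ Fin (s i)) ℝ)
    (hQi : ∀ i, (Qi i)ᵀ * Qi i = 1) (hQi' : ∀ i, Qi i * (Qi i)ᵀ = 1)
    (Ri : (i : Fin m) → Matrix (Fin q₁) (Fin q₁) ℝ)
    (hRitri : ∀ i, (Ri i).BlockTriangular id)
    (hRi : ∀ i, IsUnit (Ri i).det)
    (hQRi : ∀ i, stackD2 Qij B2 i = Qi i * Matrix.fromRows (Ri i) 0)
    (Q : Matrix ((i : Fin m) × Fin (s i)) (Fin p ⊕ Fin t) ℝ)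
    (hQ : Qᵀ * Q = 1) (hQ' : Q * Qᵀ = 1)
    (R : Matrix (Fin p) (Fin p) ℝ)
    (hRtri : R.BlockTriangular id) (hR : IsUnit R.det)
    (hQR : stackC2 Qi Qij B1 = Q * Matrix.fromRows R 0)
    (b : (i : Fin m) → (j : Fin (n i)) → (Fin q₂ ⊕ Fin (k i j)) → ℝ)
    (x : (Fin p ⊕ (Σ i : Fin m, Fin q₁ ⊕ (Fin (n i) × Fin q₂))) → ℝ)
    (hx : ((threeLevelB B1 B2 B3)ᵀ * threeLevelB B1 B2 B3).mulVec x =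
      (threeLevelB B1 B2 B3)ᵀ.mulVec (fun r => b r.1 r.2.1 r.2.2)) :
    (x ∘ Sum.inl) =
      R⁻¹.mulVec
        ((Qᵀ.mulVec fun r =>
          ((Qi r.1)ᵀ.mulVec fun u =>
            ((Qij r.1 u.1)ᵀ.mulVec (b r.1 u.1)) (Sum.inr u.2)) (Sum.inr r.2)) ∘ Sum.inl) ∧
    (∀ i : Fin m,
      (fun a => x (Sum.inr ⟨i, Sum.inl a⟩)) =
        ((Ri i)⁻¹).mulVec
          ((((Qi i)ᵀ.mulVec fun u =>
              ((Qij i u.1)ᵀ.mulVec (b i u.1)) (Sum.inr u.2)) ∘ Sum.inl)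
            - (C1 Qi Qij B1 i).mulVec (x ∘ Sum.inl))) ∧
    ∀ (i : Fin m) (j : Fin (n i)),
      (fun a => x (Sum.inr ⟨i, Sum.inr (j, a)⟩)) =
        ((Rij i j)⁻¹).mulVec
          ((((Qij i j)ᵀ.mulVec (b i j)) ∘ Sum.inl)
            - (D1 Qij B1 i j).mulVec (x ∘ Sum.inl)
            - (D1 Qij B2 i j).mulVec (fun a => x (Sum.inr ⟨i, Sum.inl a⟩))) :=
  threeLevelLS_linear_system_general B1 B2 B3 Qij hQij hQij' Rij hRij hQRij Qi hQi hQi' Ri hRi hQRi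
    Q hQ R hR hQR b x hx
end

section
/- In the three-level least squares setting with the given QR decompositions, det A = ( (product of the diagonal entries of R) · ∏_{i=1}^m ( (product of the diagonal entries of Rᵢ) · ∏_{j=1}^{nᵢ} (product of the diagonal entries of Rᵢⱼ) ) )². -/
open Matrix

section Defs

variable {p q₁ q₂ m : ℕ} {n : Fin m → ℕ} {k : (i : Fin m) → Fin (n i) → ℕ}

/-!
Every QR step multiplies a block of rows by an orthogonal matrix, which leaves the Gram matrix
`BᵀB` unchanged. Writing the row block `(i,j)` of `B` as `Bᵢⱼ E₁ + B̊ᵢⱼ E₂ᵢ + B̊̊ᵢⱼ E₃ᵢⱼ` (the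
`E`'s place a matrix into a column block of `B`), the level-3, level-2 and level-1 rotations in
turn split `BᵀB` into `𝓡ᵀ𝓡` plus Gram matrices of zero blocks, where `𝓡` is square with rows
indexed by the columns of `B`. Ordering the columns level 3 first, then level 2, then level 1
makes `𝓡` upper triangular with the diagonals of the `Rᵢⱼ`, `Rᵢ` and `R` on its diagonal, so
`det A = (det 𝓡)²`.
-/

namespace Matrix

variable {R ι κ : Type*} [CommRing R] [Fintype ι]

theorem transpose_mul_self_eq_sum_vecMulVec (W : Matrix ι κ R) :
    Wᵀ * W = ∑ r, vecMulVec (W r) (W r) := by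
  ext x y
  simp [mul_apply, vecMulVec_apply, Matrix.sum_apply]

theorem transpose_mul_self_sigma {α : ι → Type*} [∀ i, Fintype (α i)]
    (W : Matrix (Σ i, α i) κ R) :
    Wᵀ * W = ∑ i, (W.submatrix (Sigma.mk i) id)ᵀ * W.submatrix (Sigma.mk i) id := by
  simp only [transpose_mul_self_eq_sum_vecMulVec, Fintype.sum_sigma]
  rfl

theorem transpose_mul_self_fromRows {α β : Type*} [Fintype α] [Fintype β]
    (A : Matrix α κ R) (B : Matrix β κ R) :
    (fromRows A B)ᵀ * fromRows A B = Aᵀ * A + Bᵀ * B := by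
  rw [transpose_fromRows, fromCols_mul_fromRows]

theorem transpose_mul_self_transpose_mul [DecidableEq ι] {ι' : Type*} [Fintype ι']
    {Q : Matrix ι ι' R} (hQ : Q * Qᵀ = 1) (W : Matrix ι κ R) :
    (Qᵀ * W)ᵀ * (Qᵀ * W) = Wᵀ * W := by
  rw [transpose_mul, transpose_transpose, Matrix.mul_assoc, ← Matrix.mul_assoc Q, hQ,
    Matrix.one_mul]

/- The ascription on `0` makes `*` use the `Matrix` instance: without it the product elaborates
with `CStarMatrix`'s default instance, against which the `Matrix` lemmas do not rewrite. -/
theorem transpose_mul_self_add_mul_of_eq_mul_fromRows [DecidableEq ι] {α β γ : Type*}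
    [Fintype α] [Fintype β] [Fintype γ] [DecidableEq α] [DecidableEq β]
    {Q : Matrix ι (α ⊕ β) R} (hQ : Qᵀ * Q = 1) (hQ' : Q * Qᵀ = 1)
    {T : Matrix α γ R} {Y : Matrix ι γ R} (hY : Y = Q * fromRows T (0 : Matrix β γ R))
    (V : Matrix ι κ R) (F : Matrix γ κ R) :
    (V + Y * F)ᵀ * (V + Y * F) =
      ((Qᵀ * V).submatrix Sum.inl id + T * F)ᵀ * ((Qᵀ * V).submatrix Sum.inl id + T * F) +
        ((Qᵀ * V).submatrix Sum.inr id)ᵀ * (Qᵀ * V).submatrix Sum.inr id := by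
  have hQY : Qᵀ * Y = fromRows T 0 := by rw [hY, ← Matrix.mul_assoc Qᵀ, hQ, Matrix.one_mul]
  have hsplit : Qᵀ * (V + Y * F) =
      fromRows ((Qᵀ * V).submatrix Sum.inl id + T * F) ((Qᵀ * V).submatrix Sum.inr id) := by
    rw [Matrix.mul_add, ← Matrix.mul_assoc, hQY, fromRows_mul, Matrix.zero_mul]
    ext (a | b) c <;> simp
  rw [← transpose_mul_self_transpose_mul hQ', hsplit, transpose_mul_self_fromRows]

theorem det_of_blockTriangular_of_injective {m α : Type*} [Fintype m] [DecidableEq m]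
    [LinearOrder α] {M : Matrix m m R} {b : m → α} (hM : M.BlockTriangular b)
    (hb : Function.Injective b) : M.det = ∏ i, M i i :=
  letI : LinearOrder m := LinearOrder.lift' b hb
  det_of_isUpperTriangular hM

end Matrix

section ThreeLevel

variable {p q₁ q₂ m t : ℕ} {n : Fin m → ℕ} {k : (i : Fin m) → Fin (n i) → ℕ}
  {s : Fin m → ℕ} {ι : Type*}

abbrev ThreeLevelCols (p q₁ q₂ m : ℕ) (n : Fin m → ℕ) : Type :=
  Fin p ⊕ Σ i : Fin m, Fin q₁ ⊕ (Fin (n i) × Fin q₂)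

/- `X * colBlock₁ …`, `X * colBlock₂ … i` and `X * colBlock₃ … i j` place the columns of `X` in
the global, group-`i` and subgroup-`(i,j)` column blocks of `threeLevelB`. All dimensions are
explicit: with implicit ones the `HMul` instance problem of such a product is stuck. -/

def colBlock₁ (p q₁ q₂ : ℕ) (n : Fin m → ℕ) : Matrix (Fin p) (ThreeLevelCols p q₁ q₂ m n) ℝ :=
  Matrix.of fun a z => match z with
    | Sum.inl a' => if a = a' then 1 else 0
    | Sum.inr _ => 0

def colBlock₂ (p q₁ q₂ : ℕ) (n : Fin m → ℕ) (i : Fin m) :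
    Matrix (Fin q₁) (ThreeLevelCols p q₁ q₂ m n) ℝ :=
  Matrix.of fun b z => match z with
    | Sum.inr ⟨i', Sum.inl b'⟩ => if i = i' then if b = b' then 1 else 0 else 0
    | _ => 0

def colBlock₃ (p q₁ q₂ : ℕ) (n : Fin m → ℕ) (i : Fin m) (j : Fin (n i)) :
    Matrix (Fin q₂) (ThreeLevelCols p q₁ q₂ m n) ℝ :=
  Matrix.of fun c z => match z with
    | Sum.inr ⟨i', Sum.inr (j', c')⟩ =>
        if (⟨i, j⟩ : Σ i, Fin (n i)) = ⟨i', j'⟩ then if c = c' then 1 else 0 else 0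
    | _ => 0

local notation "E₁" => colBlock₁ p q₁ q₂ n
local notation "E₂" => colBlock₂ p q₁ q₂ n
local notation "E₃" => colBlock₃ p q₁ q₂ n

@[simp] lemma mul_colBlock₁_apply (X : Matrix ι (Fin p) ℝ) (r : ι)
    (z : ThreeLevelCols p q₁ q₂ m n) :
    (X * E₁) r z = match z with
      | Sum.inl a => X r a
      | Sum.inr _ => 0 := by
  rcases z with a | _ <;> simp [mul_apply, colBlock₁]

@[simp] lemma mul_colBlock₂_apply (X : Matrix ι (Fin q₁) ℝ) (r : ι) (i : Fin m)
    (z : ThreeLevelCols p q₁ q₂ m n) :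
    (X * E₂ i) r z = match z with
      | Sum.inr ⟨i', Sum.inl b⟩ => if i = i' then X r b else 0
      | _ => 0 := by
  rcases z with _ | ⟨i', b | _⟩ <;> simp [mul_apply, colBlock₂, Finset.sum_ite_irrel]

@[simp] lemma mul_colBlock₃_apply (X : Matrix ι (Fin q₂) ℝ) (r : ι) (i : Fin m)
    (j : Fin (n i)) (z : ThreeLevelCols p q₁ q₂ m n) :
    (X * E₃ i j) r z = match z with
      | Sum.inr ⟨i', Sum.inr (j', c)⟩ =>
          if (⟨i, j⟩ : Σ i, Fin (n i)) = ⟨i', j'⟩ then X r c else 0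
      | _ => 0 := by
  rcases z with _ | ⟨i', _ | ⟨j', c⟩⟩ <;> simp [mul_apply, colBlock₃, Finset.sum_ite_irrel]

variable
  (B1 : (i : Fin m) → (j : Fin (n i)) → Matrix (Fin q₂ ⊕ Fin (k i j)) (Fin p) ℝ)
  (B2 : (i : Fin m) → (j : Fin (n i)) → Matrix (Fin q₂ ⊕ Fin (k i j)) (Fin q₁) ℝ)
  (B3 : (i : Fin m) → (j : Fin (n i)) → Matrix (Fin q₂ ⊕ Fin (k i j)) (Fin q₂) ℝ)
  (Qij : (i : Fin m) → (j : Fin (n i)) →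
    Matrix (Fin q₂ ⊕ Fin (k i j)) (Fin q₂ ⊕ Fin (k i j)) ℝ)
  (Rij : (i : Fin m) → (j : Fin (n i)) → Matrix (Fin q₂) (Fin q₂) ℝ)
  (Qi : (i : Fin m) → Matrix ((j : Fin (n i)) × Fin (k i j)) (Fin q₁ ⊕ Fin (s i)) ℝ)
  (Ri : (i : Fin m) → Matrix (Fin q₁) (Fin q₁) ℝ)
  (Q : Matrix ((i : Fin m) × Fin (s i)) (Fin p ⊕ Fin t) ℝ)
  (R : Matrix (Fin p) (Fin p) ℝ)

lemma transpose_mul_self_threeLevelB :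
    (threeLevelB B1 B2 B3)ᵀ * threeLevelB B1 B2 B3 =
      ∑ i, ∑ j, (B1 i j * E₁ + B2 i j * E₂ i + B3 i j * E₃ i j)ᵀ *
        (B1 i j * E₁ + B2 i j * E₂ i + B3 i j * E₃ i j) := by
  rw [transpose_mul_self_sigma]
  refine Finset.sum_congr rfl fun i _ => ?_
  rw [transpose_mul_self_sigma]
  refine Finset.sum_congr rfl fun j _ => ?_
  have hrow : ((threeLevelB B1 B2 B3).submatrix (Sigma.mk i) id).submatrix (Sigma.mk j) id =
      B1 i j * E₁ + B2 i j * E₂ i + B3 i j * E₃ i j := by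
    ext r (a | ⟨i', b | ⟨j', c⟩⟩) <;> simp [threeLevelB]
  rw [hrow]

lemma transpose_mul_self_level₃ (hQij : ∀ i j, (Qij i j)ᵀ * Qij i j = 1)
    (hQij' : ∀ i j, Qij i j * (Qij i j)ᵀ = 1)
    (hQRij : ∀ i j, B3 i j = Qij i j * Matrix.fromRows (Rij i j) 0)
    (i : Fin m) (j : Fin (n i)) :
    (B1 i j * E₁ + B2 i j * E₂ i + B3 i j * E₃ i j)ᵀ *
        (B1 i j * E₁ + B2 i j * E₂ i + B3 i j * E₃ i j) =
      (D1 Qij B1 i j * E₁ + D1 Qij B2 i j * E₂ i + Rij i j * E₃ i j)ᵀ *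
          (D1 Qij B1 i j * E₁ + D1 Qij B2 i j * E₂ i + Rij i j * E₃ i j) +
        (D2 Qij B1 i j * E₁ + D2 Qij B2 i j * E₂ i)ᵀ *
          (D2 Qij B1 i j * E₁ + D2 Qij B2 i j * E₂ i) := by
  have hV : (Qij i j)ᵀ * (B1 i j * E₁ + B2 i j * E₂ i) =
      D0 Qij B1 i j * E₁ + D0 Qij B2 i j * E₂ i := by
    rw [Matrix.mul_add, ← Matrix.mul_assoc, ← Matrix.mul_assoc]
    rfl
  rw [transpose_mul_self_add_mul_of_eq_mul_fromRows (hQij i j) (hQij' i j) (hQRij i j), hV]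
  rfl

lemma sum_transpose_mul_self_level₂ (hQi : ∀ i, (Qi i)ᵀ * Qi i = 1)
    (hQi' : ∀ i, Qi i * (Qi i)ᵀ = 1)
    (hQRi : ∀ i, stackD2 Qij B2 i = Qi i * Matrix.fromRows (Ri i) 0) (i : Fin m) :
    ∑ j, (D2 Qij B1 i j * E₁ + D2 Qij B2 i j * E₂ i)ᵀ *
        (D2 Qij B1 i j * E₁ + D2 Qij B2 i j * E₂ i) =
      (C1 Qi Qij B1 i * E₁ + Ri i * E₂ i)ᵀ * (C1 Qi Qij B1 i * E₁ + Ri i * E₂ i) +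
        (C2 Qi Qij B1 i * E₁)ᵀ * (C2 Qi Qij B1 i * E₁) := by
  calc _ = (stackD2 Qij B1 i * E₁ + stackD2 Qij B2 i * E₂ i)ᵀ *
        (stackD2 Qij B1 i * E₁ + stackD2 Qij B2 i * E₂ i) := by
        rw [transpose_mul_self_sigma]
        rfl
    _ = _ := by
      rw [transpose_mul_self_add_mul_of_eq_mul_fromRows (hQi i) (hQi' i) (hQRi i),
        ← Matrix.mul_assoc]
      rfl

lemma sum_transpose_mul_self_level₁ (hQ : Qᵀ * Q = 1) (hQ' : Q * Qᵀ = 1)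
    (hQR : stackC2 Qi Qij B1 = Q * Matrix.fromRows R 0) :
    ∑ i, (C2 Qi Qij B1 i * E₁)ᵀ * (C2 Qi Qij B1 i * E₁) = (R * E₁)ᵀ * (R * E₁) := by
  have h := transpose_mul_self_add_mul_of_eq_mul_fromRows hQ hQ' hQR 0 E₁
  simp only [zero_add, Matrix.mul_zero, submatrix_zero, Pi.zero_apply, transpose_zero,
    add_zero] at h
  rw [← h, transpose_mul_self_sigma]
  rfl

/-- The triangular factor `𝓡` of the full QR decomposition of `threeLevelB`, with its rows
indexed, like its columns, by the columns of `threeLevelB`. -/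
def threeLevelR : Matrix (ThreeLevelCols p q₁ q₂ m n) (ThreeLevelCols p q₁ q₂ m n) ℝ :=
  Matrix.of fun z => match z with
    | Sum.inl a => (R * E₁) a
    | Sum.inr ⟨i, Sum.inl b⟩ => (C1 Qi Qij B1 i * E₁ + Ri i * E₂ i) b
    | Sum.inr ⟨i, Sum.inr (j, c)⟩ =>
        (D1 Qij B1 i j * E₁ + D1 Qij B2 i j * E₂ i + Rij i j * E₃ i j) c

lemma transpose_mul_self_threeLevelR :
    (threeLevelR B1 B2 Qij Rij Qi Ri R)ᵀ * threeLevelR B1 B2 Qij Rij Qi Ri R =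
      (R * E₁)ᵀ * (R * E₁) +
        ∑ i, ((C1 Qi Qij B1 i * E₁ + Ri i * E₂ i)ᵀ * (C1 Qi Qij B1 i * E₁ + Ri i * E₂ i) +
          ∑ j, (D1 Qij B1 i j * E₁ + D1 Qij B2 i j * E₂ i + Rij i j * E₃ i j)ᵀ *
            (D1 Qij B1 i j * E₁ + D1 Qij B2 i j * E₂ i + Rij i j * E₃ i j)) := by
  simp only [transpose_mul_self_eq_sum_vecMulVec, Fintype.sum_sum_type, Fintype.sum_sigma,
    Fintype.sum_prod_type]
  rfl

lemma transpose_mul_self_threeLevelB_eq_threeLevelR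
    (hQij : ∀ i j, (Qij i j)ᵀ * Qij i j = 1) (hQij' : ∀ i j, Qij i j * (Qij i j)ᵀ = 1)
    (hQRij : ∀ i j, B3 i j = Qij i j * Matrix.fromRows (Rij i j) 0)
    (hQi : ∀ i, (Qi i)ᵀ * Qi i = 1) (hQi' : ∀ i, Qi i * (Qi i)ᵀ = 1)
    (hQRi : ∀ i, stackD2 Qij B2 i = Qi i * Matrix.fromRows (Ri i) 0)
    (hQ : Qᵀ * Q = 1) (hQ' : Q * Qᵀ = 1)
    (hQR : stackC2 Qi Qij B1 = Q * Matrix.fromRows R 0) :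
    (threeLevelB B1 B2 B3)ᵀ * threeLevelB B1 B2 B3 =
      (threeLevelR B1 B2 Qij Rij Qi Ri R)ᵀ * threeLevelR B1 B2 Qij Rij Qi Ri R := by
  rw [transpose_mul_self_threeLevelB, transpose_mul_self_threeLevelR,
    ← sum_transpose_mul_self_level₁ B1 Qij Qi Q R hQ hQ' hQR]
  simp only [transpose_mul_self_level₃ B1 B2 B3 Qij Rij hQij hQij' hQRij,
    Finset.sum_add_distrib, sum_transpose_mul_self_level₂ B1 B2 Qij Qi Ri hQi hQi' hQRi]
  abel

def threeLevelKey : ThreeLevelCols p q₁ q₂ m n → ℕ ×ₗ ℕ ×ₗ ℕ ×ₗ ℕ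
  | Sum.inl a => toLex (2, toLex (0, toLex (0, a.val)))
  | Sum.inr ⟨i, Sum.inl b⟩ => toLex (1, toLex (i.val, toLex (0, b.val)))
  | Sum.inr ⟨i, Sum.inr (j, c)⟩ => toLex (0, toLex (i.val, toLex (j.val, c.val)))

lemma threeLevelKey_injective :
    Function.Injective (threeLevelKey (p := p) (q₁ := q₁) (q₂ := q₂) (n := n)) := by
  rintro (a | ⟨i, b | ⟨j, c⟩⟩) (a' | ⟨i', b' | ⟨j', c'⟩⟩) h <;>
    simp [threeLevelKey, Fin.val_inj] at h <;> aesop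

lemma threeLevelR_blockTriangular (hRijtri : ∀ i j, (Rij i j).BlockTriangular id)
    (hRitri : ∀ i, (Ri i).BlockTriangular id) (hRtri : R.BlockTriangular id) :
    (threeLevelR B1 B2 Qij Rij Qi Ri R).BlockTriangular threeLevelKey := by
  rintro (a | ⟨i, b | ⟨j, c⟩⟩) (a' | ⟨i', b' | ⟨j', c'⟩⟩) h <;>
    simp [threeLevelR, threeLevelKey, Prod.Lex.lt_iff] at h ⊢
  · exact hRtri h
  · rintro rfl
    exact hRitri i (by simpa using h)
  · rintro rfl hj
    obtain rfl := eq_of_heq hj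
    exact hRijtri i j (by simpa using h)

lemma det_threeLevelR (hRijtri : ∀ i j, (Rij i j).BlockTriangular id)
    (hRitri : ∀ i, (Ri i).BlockTriangular id) (hRtri : R.BlockTriangular id) :
    (threeLevelR B1 B2 Qij Rij Qi Ri R).det =
      (∏ a, R a a) * ∏ i, ((∏ a, Ri i a a) * ∏ j, ∏ a, Rij i j a a) := by
  rw [det_of_blockTriangular_of_injective
    (threeLevelR_blockTriangular B1 B2 Qij Rij Qi Ri R hRijtri hRitri hRtri)
    threeLevelKey_injective]
  simp [threeLevelR, Fintype.prod_sum_type, Fintype.prod_sigma, Fintype.prod_prod_type]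

end ThreeLevel

theorem threeLevelLS_det_general {p q₁ q₂ m t : ℕ} {n : Fin m → ℕ}
    {k : (i : Fin m) → Fin (n i) → ℕ} {s : Fin m → ℕ}
    (B1 : (i : Fin m) → (j : Fin (n i)) → Matrix (Fin q₂ ⊕ Fin (k i j)) (Fin p) ℝ)
    (B2 : (i : Fin m) → (j : Fin (n i)) → Matrix (Fin q₂ ⊕ Fin (k i j)) (Fin q₁) ℝ)
    (B3 : (i : Fin m) → (j : Fin (n i)) → Matrix (Fin q₂ ⊕ Fin (k i j)) (Fin q₂) ℝ)
    (Qij : (i : Fin m) → (j : Fin (n i)) →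
      Matrix (Fin q₂ ⊕ Fin (k i j)) (Fin q₂ ⊕ Fin (k i j)) ℝ)
    (hQij : ∀ i j, (Qij i j)ᵀ * Qij i j = 1) (hQij' : ∀ i j, Qij i j * (Qij i j)ᵀ = 1)
    (Rij : (i : Fin m) → (j : Fin (n i)) → Matrix (Fin q₂) (Fin q₂) ℝ)
    (hRijtri : ∀ i j, (Rij i j).BlockTriangular id)
    (hQRij : ∀ i j, B3 i j = Qij i j * Matrix.fromRows (Rij i j) 0)
    (Qi : (i : Fin m) → Matrix ((j : Fin (n i)) × Fin (k i j)) (Fin q₁ ⊕ Fin (s i)) ℝ)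
    (hQi : ∀ i, (Qi i)ᵀ * Qi i = 1) (hQi' : ∀ i, Qi i * (Qi i)ᵀ = 1)
    (Ri : (i : Fin m) → Matrix (Fin q₁) (Fin q₁) ℝ)
    (hRitri : ∀ i, (Ri i).BlockTriangular id)
    (hQRi : ∀ i, stackD2 Qij B2 i = Qi i * Matrix.fromRows (Ri i) 0)
    (Q : Matrix ((i : Fin m) × Fin (s i)) (Fin p ⊕ Fin t) ℝ)
    (hQ : Qᵀ * Q = 1) (hQ' : Q * Qᵀ = 1)
    (R : Matrix (Fin p) (Fin p) ℝ)
    (hRtri : R.BlockTriangular id)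
    (hQR : stackC2 Qi Qij B1 = Q * Matrix.fromRows R 0)
    :
    ((threeLevelB B1 B2 B3)ᵀ * threeLevelB B1 B2 B3).det =
      ((∏ a, R a a) * ∏ i, ((∏ a, Ri i a a) * ∏ j, ∏ a, Rij i j a a)) ^ 2 := by
  rw [transpose_mul_self_threeLevelB_eq_threeLevelR B1 B2 B3 Qij Rij Qi Ri Q R hQij hQij' hQRij
      hQi hQi' hQRi hQ hQ' hQR, det_mul, det_transpose,
    det_threeLevelR B1 B2 Qij Rij Qi Ri R hRijtri hRitri hRtri, sq]

theorem threeLevelLS_det {p q₁ q₂ m t : ℕ} {n : Fin m → ℕ}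
    {k : (i : Fin m) → Fin (n i) → ℕ} {s : Fin m → ℕ}
    (hp : 0 < p) (hq₁ : 0 < q₁) (hq₂ : 0 < q₂) (hm : 0 < m) (hn : ∀ i, 0 < n i)
    (B1 : (i : Fin m) → (j : Fin (n i)) → Matrix (Fin q₂ ⊕ Fin (k i j)) (Fin p) ℝ)
    (B2 : (i : Fin m) → (j : Fin (n i)) → Matrix (Fin q₂ ⊕ Fin (k i j)) (Fin q₁) ℝ)
    (B3 : (i : Fin m) → (j : Fin (n i)) → Matrix (Fin q₂ ⊕ Fin (k i j)) (Fin q₂) ℝ)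
    (hrank : (threeLevelB B1 B2 B3).rank =
      Fintype.card (Fin p ⊕ (Σ i : Fin m, Fin q₁ ⊕ (Fin (n i) × Fin q₂))))
    (Qij : (i : Fin m) → (j : Fin (n i)) →
      Matrix (Fin q₂ ⊕ Fin (k i j)) (Fin q₂ ⊕ Fin (k i j)) ℝ)
    (hQij : ∀ i j, (Qij i j)ᵀ * Qij i j = 1) (hQij' : ∀ i j, Qij i j * (Qij i j)ᵀ = 1)
    (Rij : (i : Fin m) → (j : Fin (n i)) → Matrix (Fin q₂) (Fin q₂) ℝ)
    (hRijtri : ∀ i j, (Rij i j).BlockTriangular id)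
    (hRij : ∀ i j, IsUnit (Rij i j).det)
    (hQRij : ∀ i j, B3 i j = Qij i j * Matrix.fromRows (Rij i j) 0)
    (Qi : (i : Fin m) → Matrix ((j : Fin (n i)) × Fin (k i j)) (Fin q₁ ⊕ Fin (s i)) ℝ)
    (hQi : ∀ i, (Qi i)ᵀ * Qi i = 1) (hQi' : ∀ i, Qi i * (Qi i)ᵀ = 1)
    (Ri : (i : Fin m) → Matrix (Fin q₁) (Fin q₁) ℝ)
    (hRitri : ∀ i, (Ri i).BlockTriangular id)
    (hRi : ∀ i, IsUnit (Ri i).det)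
    (hQRi : ∀ i, stackD2 Qij B2 i = Qi i * Matrix.fromRows (Ri i) 0)
    (Q : Matrix ((i : Fin m) × Fin (s i)) (Fin p ⊕ Fin t) ℝ)
    (hQ : Qᵀ * Q = 1) (hQ' : Q * Qᵀ = 1)
    (R : Matrix (Fin p) (Fin p) ℝ)
    (hRtri : R.BlockTriangular id) (hR : IsUnit R.det)
    (hQR : stackC2 Qi Qij B1 = Q * Matrix.fromRows R 0)
    :
    ((threeLevelB B1 B2 B3)ᵀ * threeLevelB B1 B2 B3).det =
      ((∏ a, R a a) * ∏ i, ((∏ a, Ri i a a) * ∏ j, ∏ a, Rij i j a a)) ^ 2 :=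
  threeLevelLS_det_general B1 B2 B3 Qij hQij hQij' Rij hRijtri hQRij Qi hQi hQi' Ri hRitri hQRi Q hQ
    hQ' R hRtri hQR
end Defs
end
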